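/- arXiv:1509.09274 — 9 statements merged into one kernel-verified Lean document; each statement's English description precedes it below -/
import Mathlib

section
/- Fix n ≥ 3 and an admissible total order ≺ on C_n. For every subset S ⊆ C_n the following are equivalent: (1) no subset of S is a broken circuit with respect to ≺, and there exists a function z : {1,…,n−1} → ℂ with z(1) = 0, z(n−1) = 1 and z(i) = z(j) for every {i,j} ∈ S; (2) S is a gravity diagram, i.e. there are no integers i < j < k with {i,j} ∈ S and {j,k} ∈ S, and no integers i < j < k < l with {i,k} ∈ S, {j,k} ∈ S and {j,l} ∈ S. -/
open scoped BigOperators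

/-- `ChordP n p` says that the ordered pair `p = (i, j)` represents a chord of the standard
`n`-gon, i.e. an element `{i, j}` of `C_n`: `1 ≤ i < j ≤ n - 1` and `(i, j) ≠ (1, n - 1)`. -/
def ChordP (n : ℕ) (p : ℕ × ℕ) : Prop :=
  1 ≤ p.1 ∧ p.1 < p.2 ∧ p.2 ≤ n - 1 ∧ ¬(p.1 = 1 ∧ p.2 = n - 1)

instance (n : ℕ) : DecidablePred (ChordP n) := fun p => by
  unfold ChordP; infer_instance

/-- The set `C_n` of chords of the `n`-gon, as a type. -/
def GChord (n : ℕ) : Type := {p : ℕ × ℕ // ChordP n p}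

noncomputable instance (n : ℕ) : LinearOrder (GChord n) :=
  LinearOrder.lift' (fun c : {p : ℕ × ℕ // ChordP n p} => toLex c.val)
    (fun a b h => Subtype.ext (toLex.injective h))

/-- `{i, j} ∈ D`, for a diagram `D` of chords. -/
def memPair {n : ℕ} (D : Finset (GChord n)) (i j : ℕ) : Prop :=
  ∃ c ∈ D, c.val = (i, j)

/-- A gravity (chord) diagram: a subset of `C_n` containing no pair `{i,j}, {j,k}`
with `i < j < k` and no triple `{i,k}, {j,k}, {j,l}` with `i < j < k < l`. -/
def IsGravityDiagram {n : ℕ} (D : Finset (GChord n)) : Prop :=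
  (¬ ∃ i j k : ℕ, i < j ∧ j < k ∧ memPair D i j ∧ memPair D j k) ∧
  (¬ ∃ i j k l : ℕ, i < j ∧ j < k ∧ k < l ∧
      memPair D i k ∧ memPair D j k ∧ memPair D j l)

/-- The exterior algebra `Λ_n` over `ℚ` on generators `e_c`, `c ∈ C_n`. -/
abbrev GravAlg (n : ℕ) : Type := ExteriorAlgebra ℚ (GChord n →₀ ℚ)

/-- The generator `e_c` of `Λ_n`. -/
noncomputable def e {n : ℕ} (c : GChord n) : GravAlg n :=
  ExteriorAlgebra.ι ℚ (Finsupp.single c 1)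

/-- The monomial `e_S = ∏_{c ∈ S} e_c`, the product taken in the fixed (lexicographic)
order on chords. -/
noncomputable def eMon {n : ℕ} (S : Finset (GChord n)) : GravAlg n :=
  ((S.sort (· ≤ ·)).map e).prod

/-- Adjacency of the vertices `a, b ∈ {1, …, n-1}` in the graph with edge set `A`. -/
def diagAdj {n : ℕ} (A : Finset (GChord n)) (a b : ℕ) : Prop :=
  ∃ c ∈ A, c.val = (a, b) ∨ c.val = (b, a)

/-- Degree of the vertex `a` in the graph with edge set `A`. -/
def diagDeg {n : ℕ} (A : Finset (GChord n)) (a : ℕ) : ℕ :=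
  (A.filter (fun c => c.val.1 = a ∨ c.val.2 = a)).card

/-- `A ⊆ C_n` is a circuit: the graph on `{1, …, n-1}` with edge set `A` is a cycle,
i.e. it is nonempty, every vertex incident to an edge has degree exactly `2`, and any two
incident vertices are connected by a path. -/
def IsCircuit {n : ℕ} (A : Finset (GChord n)) : Prop :=
  A.Nonempty ∧ (∀ a : ℕ, diagDeg A a ≠ 0 → diagDeg A a = 2) ∧
  ∀ a b : ℕ, diagDeg A a ≠ 0 → diagDeg A b ≠ 0 → Relation.ReflTransGen (diagAdj A) a b

/-- A broken circuit with respect to the order `prec`: a circuit with its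
`prec`-least element removed. -/
def IsBrokenCircuit {n : ℕ} (prec : GChord n → GChord n → Prop)
    (B : Finset (GChord n)) : Prop :=
  ∃ (A : Finset (GChord n)) (a : GChord n), IsCircuit A ∧ a ∈ A ∧
    (∀ b ∈ A, b ≠ a → prec a b) ∧ B = A.erase a

/-!
Along a walk in a gravity diagram that starts at its lowest vertex and never immediately
backtracks, the two forbidden patterns force every vertex to lie strictly between the two
preceding ones, so after its first step the walk stays strictly below the vertex it first
reached. Apply this from the lowest vertex `m` of a path from `u` to `w > u` whose chords have
length at most `w - u`: the next vertex is at most `m + (w - u) ≤ w`, so the path can reach `w`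
only at that step, which forces `m = u` and makes the path the single chord `{u, w}`. A broken
circuit `A ∖ {a}` would join the endpoints of `a` (each vertex of a cycle has degree two, so no
edge is a bridge) by chords no longer than `a`, because the order refines reverse length; and
the vertices `1` and `n - 1` would be joined by chords of length at most `n - 2`, so the
indicator function of the component of `n - 1` solves the linear system.

Conversely, a forbidden pattern `{i,j}, {j,k}` or `{i,k}, {j,k}, {j,l}` closes up with the
chord `{i,k}`, resp. `{i,l}`, to a triangle, resp. a square, whose least element is that
longest chord, so the pattern is a broken circuit. That chord fails to exist exactly when it
would be `{1, n-1}`, and then the pattern links `1` to `n - 1`, which makes the system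
unsolvable.
-/

variable {n : ℕ}

namespace GChord

lemma fst_lt_snd (c : GChord n) : c.val.1 < c.val.2 := c.property.2.1

lemma snd_lt (c : GChord n) : c.val.2 < n := by
  have := c.property; unfold ChordP at this; omega

def lo (c : GChord n) : Fin n := ⟨c.val.1, c.fst_lt_snd.trans c.snd_lt⟩

def hi (c : GChord n) : Fin n := ⟨c.val.2, c.snd_lt⟩

lemma eq_of_val_eq_or_swap {c d : GChord n} (h : c.val = d.val ∨ c.val = d.val.swap) :
    c = d := by
  have hc := c.fst_lt_snd
  have hd := d.fst_lt_snd
  rcases h with h | h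
  · exact Subtype.ext h
  · rw [h, Prod.fst_swap, Prod.snd_swap] at hc; omega

lemma ne_of_endpoints_ne {c d : GChord n} {i j k l : ℕ} (hc : c.val = (i, j))
    (hd : d.val = (k, l)) (h : i ≠ k ∨ j ≠ l) : c ≠ d := by
  rintro rfl
  rw [hc, Prod.mk.injEq] at hd
  omega

end GChord

lemma diagAdj_comm {A : Finset (GChord n)} {a b : ℕ} : diagAdj A a b ↔ diagAdj A b a :=
  ⟨fun ⟨c, hc, h⟩ => ⟨c, hc, h.symm⟩, fun ⟨c, hc, h⟩ => ⟨c, hc, h.symm⟩⟩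

instance (A : Finset (GChord n)) : Std.Symm (diagAdj A) := ⟨fun _ _ => diagAdj_comm.1⟩

lemma diagAdj.ne {A : Finset (GChord n)} {a b : ℕ} (h : diagAdj A a b) : a ≠ b := by
  obtain ⟨c, -, h | h⟩ := h <;> have := c.fst_lt_snd <;> rw [h] at this <;> omega

lemma diagAdj.memPair_of_lt {A : Finset (GChord n)} {a b : ℕ} (h : diagAdj A a b) (hab : a < b) :
    memPair A a b := by
  obtain ⟨c, hc, h | h⟩ := h
  · exact ⟨c, hc, h⟩
  · have := c.fst_lt_snd; rw [h] at this; omega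

lemma diagAdj.memPair_of_gt {A : Finset (GChord n)} {a b : ℕ} (h : diagAdj A a b) (hba : b < a) :
    memPair A b a :=
  (diagAdj_comm.1 h).memPair_of_lt hba

lemma diagAdj.le_add {A : Finset (GChord n)} {a b L : ℕ} (h : diagAdj A a b)
    (hL : ∀ c ∈ A, c.val.2 - c.val.1 ≤ L) : b ≤ a + L ∧ a ≤ b + L := by
  obtain ⟨c, hc, h | h⟩ := h <;> have := hL c hc <;> have := c.fst_lt_snd <;>
    simp only [h] at * <;> omega

/-- The vertex type is `Fin n` rather than `ℕ` so that the graph is finite; vertex `0` is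
isolated. -/
def diagGraph (A : Finset (GChord n)) : SimpleGraph (Fin n) where
  Adj a b := diagAdj A a b
  symm := ⟨fun _ _ => diagAdj_comm.1⟩
  loopless := ⟨fun _ h => h.ne rfl⟩

lemma diagGraph_adj_lo_hi {A : Finset (GChord n)} {c : GChord n} (hc : c ∈ A) :
    (diagGraph A).Adj c.lo c.hi :=
  ⟨c, hc, Or.inl rfl⟩

lemma ncard_neighborSet_diagGraph (A : Finset (GChord n)) (x : Fin n) :
    ((diagGraph A).neighborSet x).ncard = diagDeg A x := by
  rw [diagDeg, ← Set.ncard_coe_finset]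
  symm
  -- a chord at `x` is sent to its other endpoint `c.1 + c.2 - x`
  refine Set.ncard_congr (fun c hc => ⟨c.val.1 + c.val.2 - x, ?_⟩) ?_ ?_ ?_
  · have := c.fst_lt_snd
    have := c.snd_lt
    simp only [Finset.coe_filter, Set.mem_ofPred_eq] at hc
    omega
  · intro c hc
    simp only [Finset.coe_filter, Set.mem_ofPred_eq] at hc
    refine ⟨c, hc.1, ?_⟩
    rcases hc.2 with h | h
    · left; ext <;> dsimp only <;> omega
    · right; ext <;> dsimp only <;> omega
  · intro c d hc hd hcd
    simp only [Finset.coe_filter, Set.mem_ofPred_eq, Fin.mk.injEq] at hc hd hcd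
    have := c.fst_lt_snd
    have := d.fst_lt_snd
    apply Subtype.ext
    ext <;> omega
  · rintro y ⟨c, hc, h⟩
    refine ⟨c, ?_, ?_⟩
    · simp only [Finset.coe_filter, Set.mem_ofPred_eq]
      rcases h with h | h <;> simp [hc, h]
    · rcases h with h | h <;> simp [h]

lemma isCycles_diagGraph {A : Finset (GChord n)}
    (hA : ∀ a, diagDeg A a ≠ 0 → diagDeg A a = 2) : (diagGraph A).IsCycles := by
  intro x hx
  rw [ncard_neighborSet_diagGraph]
  refine hA x ?_
  rw [← ncard_neighborSet_diagGraph]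
  exact ((Set.ncard_pos (Set.toFinite _)).2 hx).ne'

lemma deleteEdges_diagGraph_le (A : Finset (GChord n)) (a : GChord n) :
    (diagGraph A).deleteEdges {s(a.lo, a.hi)} ≤ diagGraph (A.erase a) := by
  rintro x y ⟨hadj, hxy⟩
  obtain ⟨c, hc, h⟩ := id hadj
  refine ⟨c, Finset.mem_erase.2 ⟨?_, hc⟩, h⟩
  rintro rfl
  refine hxy ((SimpleGraph.fromEdgeSet_adj _).2 ⟨?_, hadj.ne⟩)
  simp only [Set.mem_singleton_iff, Sym2.eq_iff, GChord.lo, GChord.hi, Fin.ext_iff]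
  rcases h with h | h <;> simp [h]

lemma IsCircuit.reachable_erase {A : Finset (GChord n)} (hA : IsCircuit A) {a : GChord n}
    (ha : a ∈ A) : (diagGraph (A.erase a)).Reachable a.lo a.hi :=
  ((isCycles_diagGraph hA.2.1).reachable_deleteEdges (diagGraph_adj_lo_hi ha)).mono
    (deleteEdges_diagGraph_le A a)

lemma Set.mem_Ioo_of_forall_mem_uIoo {α : Type*} [LinearOrder α] {v : ℕ → α} {r : ℕ}
    (h01 : v 0 ≤ v 1) (hv : ∀ t, t + 2 ≤ r → v (t + 2) ∈ Set.uIoo (v t) (v (t + 1)))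
    {t : ℕ} (h2t : 2 ≤ t) (htr : t ≤ r) : v t ∈ Set.Ioo (v 0) (v 1) := by
  have hIcc : ∀ t, t + 1 ≤ r →
      v t ∈ Set.Icc (v 0) (v 1) ∧ v (t + 1) ∈ Set.Icc (v 0) (v 1) := by
    intro t
    induction t with
    | zero => exact fun _ => ⟨⟨le_rfl, h01⟩, ⟨h01, le_rfl⟩⟩
    | succ t ih =>
      intro ht
      obtain ⟨h₀, h₁⟩ := ih (by omega)
      exact ⟨h₁, Set.Ioo_subset_Icc_self (Set.uIoo_subset_Ioo h₀ h₁ (hv t (by omega)))⟩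
  obtain ⟨t, rfl⟩ : ∃ s, t = s + 2 := ⟨t - 2, by omega⟩
  obtain ⟨h₀, h₁⟩ := hIcc t (by omega)
  exact Set.uIoo_subset_Ioo h₀ h₁ (hv t htr)

namespace IsGravityDiagram

variable {S : Finset (GChord n)}

lemma mono {B : Finset (GChord n)} (hS : IsGravityDiagram S) (hBS : B ⊆ S) :
    IsGravityDiagram B := by
  have hmem : ∀ {i j}, memPair B i j → memPair S i j := fun ⟨c, hc, h⟩ => ⟨c, hBS hc, h⟩
  exact ⟨fun ⟨i, j, k, hij, hjk, h₁, h₂⟩ =>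
      hS.1 ⟨i, j, k, hij, hjk, hmem h₁, hmem h₂⟩,
    fun ⟨i, j, k, l, hij, hjk, hkl, h₁, h₂, h₃⟩ =>
      hS.2 ⟨i, j, k, l, hij, hjk, hkl, hmem h₁, hmem h₂, hmem h₃⟩⟩

lemma lt_of_diagAdj_of_lt (hS : IsGravityDiagram S) {a b c : ℕ} (hab : diagAdj S a b)
    (hbc : diagAdj S b c) (h : a < b) : c < b := by
  refine lt_of_le_of_ne (not_lt.1 fun hlt => hS.1 ⟨a, b, c, h, hlt, ?_, ?_⟩) hbc.ne.symm
  · exact hab.memPair_of_lt h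
  · exact hbc.memPair_of_lt hlt

lemma mem_uIoo_of_diagAdj (hS : IsGravityDiagram S) {a b c d : ℕ} (hab : diagAdj S a b)
    (hbc : diagAdj S b c) (hcd : diagAdj S c d) (hc : c ∈ Set.uIoo a b) (hdb : d ≠ b) :
    d ∈ Set.uIoo b c := by
  have hcd' := hcd.ne
  rcases lt_or_gt_of_ne (show a ≠ b from fun h => by simp [h] at hc) with h | h
  · rw [Set.uIoo_of_lt h] at hc
    have hdc : c < d := by
      refine lt_of_le_of_ne (not_lt.1 fun hlt => hS.1 ⟨d, c, b, hlt, hc.2, ?_, ?_⟩) hcd'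
      · exact hcd.memPair_of_gt hlt
      · exact hbc.memPair_of_gt hc.2
    have hdb : d < b := by
      refine lt_of_le_of_ne (not_lt.1 fun hlt => hS.2 ⟨a, c, b, d, hc.1, hc.2, hlt, ?_, ?_, ?_⟩)
        hdb
      · exact hab.memPair_of_lt h
      · exact hbc.memPair_of_gt hc.2
      · exact hcd.memPair_of_lt hdc
    exact Set.mem_uIoo_of_gt hdc hdb
  · rw [Set.uIoo_of_gt h] at hc
    have hdc : d < c := by
      refine lt_of_le_of_ne (not_lt.1 fun hlt => hS.1 ⟨b, c, d, hc.1, hlt, ?_, ?_⟩) hcd'.symm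
      · exact hbc.memPair_of_lt hc.1
      · exact hcd.memPair_of_lt hlt
    have hbd : b < d := by
      refine lt_of_le_of_ne (not_lt.1 fun hlt => hS.2 ⟨d, b, c, a, hlt, hc.1, hc.2, ?_, ?_, ?_⟩)
        hdb.symm
      · exact hcd.memPair_of_gt hdc
      · exact hbc.memPair_of_lt hc.1
      · exact hab.memPair_of_gt h
    exact Set.mem_uIoo_of_lt hbd hdc

lemma mem_uIoo_of_walk (hS : IsGravityDiagram S) {v : ℕ → ℕ} {r : ℕ}
    (hadj : ∀ t < r, diagAdj S (v t) (v (t + 1)))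
    (hback : ∀ t, t + 2 ≤ r → v (t + 2) ≠ v t) (hmin : ∀ t ≤ r, v 0 ≤ v t) :
    ∀ t, t + 2 ≤ r → v (t + 2) ∈ Set.uIoo (v t) (v (t + 1)) := by
  intro t
  induction t with
  | zero =>
    intro hr
    have h01 : v 0 < v 1 := lt_of_le_of_ne (hmin 1 (by omega)) (hadj 0 (by omega)).ne
    have h02 : v 0 < v 2 := lt_of_le_of_ne (hmin 2 hr) (hback 0 hr).symm
    exact Set.mem_uIoo_of_lt h02 (hS.lt_of_diagAdj_of_lt (hadj 0 (by omega)) (hadj 1 hr) h01)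
  | succ t ih =>
    intro hr
    exact hS.mem_uIoo_of_diagAdj (hadj t (by omega)) (hadj (t + 1) (by omega))
      (hadj (t + 2) (by omega)) (ih (by omega)) (hback (t + 1) hr)

theorem not_reachable (hS : IsGravityDiagram S) {u w : Fin n} (huw : u < w)
    (hadj : ¬ (diagGraph S).Adj u w)
    (hlen : ∀ c ∈ S, c.val.2 - c.val.1 ≤ (w : ℕ) - u) : ¬ (diagGraph S).Reachable u w := by
  intro hreach
  obtain ⟨p, hp⟩ := hreach.exists_isPath
  set r := p.length
  set v : ℕ → ℕ := fun t => p.getVert t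
  have hv0 : v 0 = u := by simp [v]
  have hvr : v r = w := by simp [v, r]
  have hinj : ∀ t ≤ r, ∀ t' ≤ r, v t = v t' → t = t' :=
    fun t ht t' ht' h => hp.getVert_injOn ht ht' (Fin.ext h)
  have hstep : ∀ t < r, diagAdj S (v t) (v (t + 1)) := fun t ht => p.adj_getVert_succ ht
  obtain ⟨s, hs, hmin⟩ := (Finset.range (r + 1)).exists_min_image v ⟨0, by simp⟩
  simp only [Finset.mem_range, Nat.lt_succ_iff] at hs hmin
  have hvs : v s ≤ u := hv0 ▸ hmin 0 (Nat.zero_le _)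
  have hsr : s < r := lt_of_le_of_ne hs fun h => by rw [h] at hvs; omega
  have hv1 : v (s + 1) ≤ w := by have := (hstep s hsr).le_add hlen; omega
  rcases (show s + 1 = r ∨ s + 2 ≤ r by omega) with hr | hr
  · have hs0 : s = 0 := by
      refine hinj s hs 0 (Nat.zero_le _) ?_
      have := (hstep s hsr).le_add hlen
      rw [hr, hvr] at this
      omega
    subst hs0
    have h01 := hstep 0 hsr
    rw [hv0, hr, hvr] at h01
    exact hadj h01
  · have hmid := Set.mem_Ioo_of_forall_mem_uIoo (v := fun t => v (s + t)) (r := r - s)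
      (hmin (s + 1) (by omega))
      (hS.mem_uIoo_of_walk (fun t ht => hstep (s + t) (by omega))
        (fun t ht h => by have := hinj (s + t + 2) (by omega) (s + t) (by omega) h; omega)
        (fun t ht => hmin (s + t) (by omega)))
      (t := r - s) (by omega) le_rfl
    simp only [Nat.add_sub_cancel' hs, Set.mem_Ioo] at hmid
    omega

theorem not_isBrokenCircuit (hS : IsGravityDiagram S) {prec : GChord n → GChord n → Prop}
    (hprec : IsStrictTotalOrder (GChord n) prec)
    (hadm : ∀ c d : GChord n, c.val.2 - c.val.1 > d.val.2 - d.val.1 → prec c d)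
    {B : Finset (GChord n)} (hBS : B ⊆ S) : ¬ IsBrokenCircuit prec B := by
  rintro ⟨A, a, hA, ha, hleast, rfl⟩
  refine (hS.mono hBS).not_reachable a.fst_lt_snd ?_ ?_ (hA.reachable_erase ha)
  · rintro ⟨c, hc, h⟩
    exact (Finset.mem_erase.1 hc).1 (GChord.eq_of_val_eq_or_swap h)
  · intro c hc
    by_contra hlong
    exact asymm_of prec (hleast c (Finset.mem_erase.1 hc).2 (Finset.mem_erase.1 hc).1)
      (hadm c a (by change ¬ c.val.2 - c.val.1 ≤ a.val.2 - a.val.1 at hlong; omega))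

theorem exists_solution (hS : IsGravityDiagram S) (hn : 3 ≤ n) :
    ∃ z : ℕ → ℂ, z 1 = 0 ∧ z (n - 1) = 1 ∧ ∀ c ∈ S, z c.val.1 = z c.val.2 := by
  classical
  let top : Fin n := ⟨n - 1, by omega⟩
  let z : ℕ → ℂ := fun x =>
    if ∃ v : Fin n, (v : ℕ) = x ∧ (diagGraph S).Reachable v top then 1 else 0
  have hz : ∀ v : Fin n, z v = if (diagGraph S).Reachable v top then 1 else 0 := by
    intro v
    simp only [z, Fin.val_inj, exists_eq_left]
  refine ⟨z, ?_, hz top ▸ if_pos (SimpleGraph.Reachable.refl _), fun c hc => ?_⟩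
  · have hbot := hz ⟨1, by omega⟩
    refine hbot.trans (if_neg (hS.not_reachable (show 1 < n - 1 by omega) ?_ ?_))
    · rintro ⟨c, -, h | h⟩
      · exact c.property.2.2.2 (by rw [h]; exact ⟨rfl, rfl⟩)
      · have := c.fst_lt_snd
        rw [h] at this
        change n - 1 < 1 at this
        omega
    · intro c _
      have := c.property
      simp only [ChordP] at this
      change c.val.2 - c.val.1 ≤ (n - 1) - 1
      omega
  · rw [show c.val.1 = c.lo from rfl, show c.val.2 = c.hi from rfl, hz, hz]
    have hadj := diagGraph_adj_lo_hi hc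
    exact if_congr ⟨hadj.symm.reachable.trans, hadj.reachable.trans⟩ rfl rfl

end IsGravityDiagram

lemma diagDeg_eq_sum (A : Finset (GChord n)) (x : ℕ) :
    diagDeg A x = ∑ c ∈ A, if c.val.1 = x ∨ c.val.2 = x then 1 else 0 :=
  Finset.card_filter _ _

lemma isCircuit_of_reflTransGen {A : Finset (GChord n)} (hne : A.Nonempty)
    (hdeg : ∀ x, diagDeg A x ≠ 0 → diagDeg A x = 2) (r : ℕ)
    (hconn : ∀ x, diagDeg A x ≠ 0 → Relation.ReflTransGen (diagAdj A) r x) : IsCircuit A :=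
  ⟨hne, hdeg, fun x y hx hy => (symm (hconn x hx)).trans (hconn y hy)⟩

lemma isCircuit_triangle {c₀ c₁ c₂ : GChord n} {i j k : ℕ} (h₀ : c₀.val = (i, k))
    (h₁ : c₁.val = (i, j)) (h₂ : c₂.val = (j, k)) : IsCircuit {c₀, c₁, c₂} := by
  have hij := c₁.fst_lt_snd
  have hjk := c₂.fst_lt_snd
  rw [h₁] at hij
  rw [h₂] at hjk
  have h₀₁ : c₀ ≠ c₁ := GChord.ne_of_endpoints_ne h₀ h₁ (by omega)
  have h₀₂ : c₀ ≠ c₂ := GChord.ne_of_endpoints_ne h₀ h₂ (by omega)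
  have h₁₂ : c₁ ≠ c₂ := GChord.ne_of_endpoints_ne h₁ h₂ (by omega)
  have hdeg : ∀ x, diagDeg {c₀, c₁, c₂} x = (if i = x ∨ k = x then 1 else 0) +
      ((if i = x ∨ j = x then 1 else 0) + (if j = x ∨ k = x then 1 else 0)) := by
    intro x
    rw [diagDeg_eq_sum, Finset.sum_insert (by simp [h₀₁, h₀₂]),
      Finset.sum_insert (by simp [h₁₂]), Finset.sum_singleton, h₀, h₁, h₂]
  refine isCircuit_of_reflTransGen (Finset.insert_nonempty _ _)
    (fun x => by rw [hdeg]; split_ifs <;> omega) i fun x hx => ?_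
  obtain rfl | rfl | rfl : x = i ∨ x = j ∨ x = k := by
    rw [hdeg] at hx; split_ifs at hx <;> omega
  · exact Relation.ReflTransGen.refl
  · exact .single ⟨c₁, by simp, Or.inl h₁⟩
  · exact .single ⟨c₀, by simp, Or.inl h₀⟩

lemma isCircuit_square {c₀ c₁ c₂ c₃ : GChord n} {i j k l : ℕ} (h₀ : c₀.val = (i, l))
    (h₁ : c₁.val = (i, k)) (h₂ : c₂.val = (j, k)) (h₃ : c₃.val = (j, l)) (hij : i < j)
    (hkl : k < l) : IsCircuit {c₀, c₁, c₂, c₃} := by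
  have hjk := c₂.fst_lt_snd
  rw [h₂] at hjk
  have h₀₁ : c₀ ≠ c₁ := GChord.ne_of_endpoints_ne h₀ h₁ (by omega)
  have h₀₂ : c₀ ≠ c₂ := GChord.ne_of_endpoints_ne h₀ h₂ (by omega)
  have h₀₃ : c₀ ≠ c₃ := GChord.ne_of_endpoints_ne h₀ h₃ (by omega)
  have h₁₂ : c₁ ≠ c₂ := GChord.ne_of_endpoints_ne h₁ h₂ (by omega)
  have h₁₃ : c₁ ≠ c₃ := GChord.ne_of_endpoints_ne h₁ h₃ (by omega)
  have h₂₃ : c₂ ≠ c₃ := GChord.ne_of_endpoints_ne h₂ h₃ (by omega)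
  have hdeg : ∀ x, diagDeg {c₀, c₁, c₂, c₃} x = (if i = x ∨ l = x then 1 else 0) +
      ((if i = x ∨ k = x then 1 else 0) + ((if j = x ∨ k = x then 1 else 0) +
        (if j = x ∨ l = x then 1 else 0))) := by
    intro x
    rw [diagDeg_eq_sum, Finset.sum_insert (by simp [h₀₁, h₀₂, h₀₃]),
      Finset.sum_insert (by simp [h₁₂, h₁₃]), Finset.sum_insert (by simp [h₂₃]),
      Finset.sum_singleton, h₀, h₁, h₂, h₃]
  refine isCircuit_of_reflTransGen (Finset.insert_nonempty _ _)
    (fun x => by rw [hdeg]; split_ifs <;> omega) i fun x hx => ?_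
  obtain rfl | rfl | rfl | rfl : x = i ∨ x = j ∨ x = k ∨ x = l := by
    rw [hdeg] at hx; split_ifs at hx <;> omega
  · exact Relation.ReflTransGen.refl
  · exact .tail (.single ⟨c₁, by simp, Or.inl h₁⟩) ⟨c₂, by simp, Or.inr h₂⟩
  · exact .single ⟨c₁, by simp, Or.inl h₁⟩
  · exact .single ⟨c₀, by simp, Or.inl h₀⟩

lemma IsCircuit.isBrokenCircuit_erase {prec : GChord n → GChord n → Prop}
    (hadm : ∀ c d : GChord n, c.val.2 - c.val.1 > d.val.2 - d.val.1 → prec c d)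
    {A : Finset (GChord n)} (hA : IsCircuit A) {a : GChord n} (ha : a ∈ A)
    (hlong : ∀ b ∈ A, b ≠ a → b.val.2 - b.val.1 < a.val.2 - a.val.1) :
    IsBrokenCircuit prec (A.erase a) :=
  ⟨A, a, hA, ha, fun b hb hba => hadm a b (hlong b hb hba), rfl⟩

section Nbc

variable {α : Type*} {S : Finset (GChord n)} {prec : GChord n → GChord n → Prop}

lemma not_memPair_memPair_of_nbc
    (hadm : ∀ c d : GChord n, c.val.2 - c.val.1 > d.val.2 - d.val.1 → prec c d)
    (hnbc : ∀ B ⊆ S, ¬ IsBrokenCircuit prec B) {z : ℕ → α} (hz : z 1 ≠ z (n - 1))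
    (hzS : ∀ c ∈ S, z c.val.1 = z c.val.2) {i j k : ℕ} (hij : i < j) (hjk : j < k) :
    ¬ (memPair S i j ∧ memPair S j k) := by
  rintro ⟨⟨c₁, hc₁, h₁⟩, ⟨c₂, hc₂, h₂⟩⟩
  have hi := c₁.property
  have hk := c₂.property
  rw [h₁] at hi
  rw [h₂] at hk
  by_cases hend : i = 1 ∧ k = n - 1
  · have e₁ := hzS c₁ hc₁
    have e₂ := hzS c₂ hc₂
    rw [h₁, hend.1] at e₁
    rw [h₂, hend.2] at e₂
    exact hz (e₁.trans e₂)
  · let c₀ : GChord n := ⟨(i, k), hi.1, hij.trans hjk, hk.2.2.1, hend⟩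
    refine hnbc _ ((Finset.erase_insert_subset _ _).trans
      (by simp [Finset.insert_subset_iff, hc₁, hc₂]))
      ((isCircuit_triangle (c₀ := c₀) rfl h₁ h₂).isBrokenCircuit_erase hadm (by simp) ?_)
    intro b hb hba
    simp only [Finset.mem_insert, Finset.mem_singleton] at hb
    rcases hb with rfl | rfl | rfl
    · exact absurd rfl hba
    all_goals simp only [h₁, h₂, c₀]; omega

lemma not_memPair_memPair_memPair_of_nbc
    (hadm : ∀ c d : GChord n, c.val.2 - c.val.1 > d.val.2 - d.val.1 → prec c d)
    (hnbc : ∀ B ⊆ S, ¬ IsBrokenCircuit prec B) {z : ℕ → α} (hz : z 1 ≠ z (n - 1))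
    (hzS : ∀ c ∈ S, z c.val.1 = z c.val.2) {i j k l : ℕ} (hij : i < j) (hjk : j < k)
    (hkl : k < l) : ¬ (memPair S i k ∧ memPair S j k ∧ memPair S j l) := by
  rintro ⟨⟨c₁, hc₁, h₁⟩, ⟨c₂, hc₂, h₂⟩, ⟨c₃, hc₃, h₃⟩⟩
  have hi := c₁.property
  have hl := c₃.property
  rw [h₁] at hi
  rw [h₃] at hl
  by_cases hend : i = 1 ∧ l = n - 1
  · have e₁ := hzS c₁ hc₁
    have e₂ := hzS c₂ hc₂
    have e₃ := hzS c₃ hc₃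
    rw [h₁, hend.1] at e₁
    rw [h₂] at e₂
    rw [h₃, hend.2] at e₃
    exact hz (e₁.trans (e₂.symm.trans e₃))
  · let c₀ : GChord n := ⟨(i, l), hi.1, by omega, hl.2.2.1, hend⟩
    refine hnbc _ ((Finset.erase_insert_subset _ _).trans
      (by simp [Finset.insert_subset_iff, hc₁, hc₂, hc₃]))
      ((isCircuit_square (c₀ := c₀) rfl h₁ h₂ h₃ hij hkl).isBrokenCircuit_erase hadm
        (by simp) ?_)
    intro b hb hba
    simp only [Finset.mem_insert, Finset.mem_singleton] at hb
    rcases hb with rfl | rfl | rfl | rfl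
    · exact absurd rfl hba
    all_goals simp only [h₁, h₂, h₃, c₀]; omega

theorem isGravityDiagram_of_nbc
    (hadm : ∀ c d : GChord n, c.val.2 - c.val.1 > d.val.2 - d.val.1 → prec c d)
    (hnbc : ∀ B ⊆ S, ¬ IsBrokenCircuit prec B) {z : ℕ → α} (hz : z 1 ≠ z (n - 1))
    (hzS : ∀ c ∈ S, z c.val.1 = z c.val.2) : IsGravityDiagram S :=
  ⟨fun ⟨_, _, _, hij, hjk, h₁, h₂⟩ =>
      not_memPair_memPair_of_nbc hadm hnbc hz hzS hij hjk ⟨h₁, h₂⟩,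
    fun ⟨_, _, _, _, hij, hjk, hkl, h₁, h₂, h₃⟩ =>
      not_memPair_memPair_memPair_of_nbc hadm hnbc hz hzS hij hjk hkl ⟨h₁, h₂, h₃⟩⟩

end Nbc

/-- fix `n ≥ 3` and an admissible total order `≺` on `C_n`.  For every
`S ⊆ C_n`, the following are equivalent: (1) no subset of `S` is a broken circuit and the
linear system `z 1 = 0`, `z (n-1) = 1`, `z i = z j` for `{i,j} ∈ S` is solvable over `ℂ`;
(2) `S` is a gravity diagram. -/
theorem nbc_iff_gravity (n : ℕ) (hn : 3 ≤ n)
    (prec : GChord n → GChord n → Prop)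
    (hprec : IsStrictTotalOrder (GChord n) prec)
    (hadm : ∀ c d : GChord n, c.val.2 - c.val.1 > d.val.2 - d.val.1 → prec c d)
    (S : Finset (GChord n)) :
    ((∀ B ⊆ S, ¬ IsBrokenCircuit prec B) ∧
      ∃ z : ℕ → ℂ, z 1 = 0 ∧ z (n - 1) = 1 ∧ ∀ c ∈ S, z c.val.1 = z c.val.2) ↔
    IsGravityDiagram S := by
  constructor
  · rintro ⟨hnbc, z, hz₁, hz₂, hzS⟩
    exact isGravityDiagram_of_nbc hadm hnbc (by simp [hz₁, hz₂]) hzS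
  · intro hS
    exact ⟨fun B hBS => hS.not_isBrokenCircuit hprec hadm hBS, hS.exists_solution hn⟩
end

section
/- Let n, m ≥ 3 and 1 ≤ s ≤ n−1. If D₁ ⊆ C_n and D₂ ⊆ C_m are gravity diagrams, then the grafting φ¹(D₁) ∪ φ²(D₂) ∪ {c₀} ⊆ C_{n+m−2} is a gravity diagram. -/
/-- Two chords `{i,j}` and `{k,l}` cross if `i < k ≤ j < l` or `k < i ≤ l < j`. -/
def ChordCross (c d : ℕ × ℕ) : Prop :=
  (c.1 < d.1 ∧ d.1 ≤ c.2 ∧ c.2 < d.2) ∨ (d.1 < c.1 ∧ c.1 ≤ d.2 ∧ d.2 < c.2)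

/-- A gravity (chord) diagram in `C_n`: a subset of `C_n` containing no pair
`{i,j}, {j,k}` with `i < j < k` and no triple `{i,k}, {j,k}, {j,l}` with
`i < j < k < l`.  Chords are recorded as ordered pairs `(i, j)` with `i < j`. -/
def IsGravitySet (n : ℕ) (D : Set (ℕ × ℕ)) : Prop :=
  (∀ p ∈ D, ChordP n p) ∧
  (¬ ∃ i j k : ℕ, i < j ∧ j < k ∧ (i, j) ∈ D ∧ (j, k) ∈ D) ∧
  (¬ ∃ i j k l : ℕ, i < j ∧ j < k ∧ k < l ∧ (i, k) ∈ D ∧ (j, k) ∈ D ∧ (j, l) ∈ D)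

/-- The chord `c ∈ D` is residual in `D`: no chord of `D` crosses `c`. -/
def IsResidual (D : Set (ℕ × ℕ)) (c : ℕ × ℕ) : Prop :=
  ∀ d ∈ D, ¬ ChordCross d c

/-- The map `φ¹ : C_n → C_{n+m-2}` induced by grafting an `m`-gon onto the side `s`
of the `n`-gon. -/
def phiOuter (s m : ℕ) (p : ℕ × ℕ) : ℕ × ℕ :=
  if p.2 < s then p
  else if p.1 ≤ s then (p.1, p.2 + (m - 2))
  else (p.1 + (m - 2), p.2 + (m - 2))

/-- The map `φ² : C_m → C_{n+m-2}` induced by grafting an `m`-gon onto the side `s`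
of the `n`-gon. -/
def phiInner (s : ℕ) (p : ℕ × ℕ) : ℕ × ℕ :=
  (p.1 + (s - 1), p.2 + (s - 1))

/-- The grafting of the diagrams `D₁ ⊆ C_n` and `D₂ ⊆ C_m` along the side `s`:
`φ¹(D₁) ∪ φ²(D₂) ∪ {c₀}` where `c₀ = {s, s+m-2}`. -/
def graft (s m : ℕ) (D₁ D₂ : Set (ℕ × ℕ)) : Set (ℕ × ℕ) :=
  phiOuter s m '' D₁ ∪ phiInner s '' D₂ ∪ {(s, s + (m - 2))}

/-- grafting two gravity diagrams produces a gravity diagram. -/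
theorem graft_isGravity (n m s : ℕ) (hn : 3 ≤ n) (hm : 3 ≤ m)
    (hs1 : 1 ≤ s) (hs2 : s ≤ n - 1)
    (D₁ D₂ : Set (ℕ × ℕ))
    (h₁ : IsGravitySet n D₁) (h₂ : IsGravitySet m D₂) :
    IsGravitySet (n + m - 2) (graft s m D₁ D₂) := by
  obtain ⟨h1c, h1a, h1b⟩ := h₁
  obtain ⟨h2c, h2a, h2b⟩ := h₂
  have key : ∀ a b : ℕ, (a, b) ∈ graft s m D₁ D₂ →
      (∃ u v : ℕ, (u, v) ∈ D₁ ∧ 1 ≤ u ∧ u < v ∧ v ≤ n - 1 ∧ ¬(u = 1 ∧ v = n - 1) ∧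
        ((u ≤ s ∧ a = u) ∨ (s < u ∧ a = u + (m - 2))) ∧
        ((v < s ∧ b = v) ∨ (s ≤ v ∧ b = v + (m - 2)))) ∨
      (∃ u v : ℕ, (u, v) ∈ D₂ ∧ 1 ≤ u ∧ u < v ∧ v ≤ m - 1 ∧ ¬(u = 1 ∧ v = m - 1) ∧
        a = u + (s - 1) ∧ b = v + (s - 1)) ∨
      (a = s ∧ b = s + (m - 2)) := by
    intro a b hab
    simp only [graft, Set.mem_union, Set.mem_image, Set.mem_singleton_iff] at hab
    rcases hab with (⟨⟨u, v⟩, hp, heq⟩ | ⟨⟨u, v⟩, hp, heq⟩) | hab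
    · obtain ⟨hp1, hp2, hp3, hp4⟩ :
          1 ≤ u ∧ u < v ∧ v ≤ n - 1 ∧ ¬(u = 1 ∧ v = n - 1) := h1c _ hp
      have hrw : phiOuter s m (u, v) =
          if v < s then (u, v) else if u ≤ s then (u, v + (m - 2))
          else (u + (m - 2), v + (m - 2)) := rfl
      rw [hrw] at heq
      left
      split_ifs at heq with h1 h2 <;> injection heq with e1 e2 <;>
        exact ⟨u, v, hp, hp1, hp2, hp3, hp4, by omega, by omega⟩
    · obtain ⟨hp1, hp2, hp3, hp4⟩ :
          1 ≤ u ∧ u < v ∧ v ≤ m - 1 ∧ ¬(u = 1 ∧ v = m - 1) := h2c _ hp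
      have hrw : phiInner s (u, v) = (u + (s - 1), v + (s - 1)) := rfl
      rw [hrw] at heq
      injection heq with e1 e2
      right; left
      exact ⟨u, v, hp, hp1, hp2, hp3, hp4, by omega, by omega⟩
    · have hab' : (a, b) = (s, s + (m - 2)) := hab
      injection hab' with e1 e2
      right; right; exact ⟨e1, e2⟩
  refine ⟨?_, ?_, ?_⟩
  · rintro ⟨a, b⟩ hx
    show 1 ≤ a ∧ a < b ∧ b ≤ n + m - 2 - 1 ∧ ¬(a = 1 ∧ b = n + m - 2 - 1)
    rcases key a b hx with ⟨u, v, hm₁, ha₁, hb₁, hc₁, hd₁, he₁, hf₁⟩ |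
      ⟨u, v, hm₁, ha₁, hb₁, hc₁, hd₁, he₁, hf₁⟩ | ⟨he₁, hf₁⟩ <;> omega
  · rintro ⟨i, j, k, hij, hjk, hc, hd⟩
    rcases key i j hc with ⟨u₁, v₁, hm₁, ha₁, hb₁, hc₁, hd₁, he₁, hf₁⟩ |
        ⟨u₁, v₁, hm₁, ha₁, hb₁, hc₁, hd₁, he₁, hf₁⟩ | ⟨he₁, hf₁⟩ <;>
      rcases key j k hd with ⟨u₂, v₂, hm₂, ha₂, hb₂, hc₂, hd₂, he₂, hf₂⟩ |
        ⟨u₂, v₂, hm₂, ha₂, hb₂, hc₂, hd₂, he₂, hf₂⟩ | ⟨he₂, hf₂⟩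
    all_goals try omega
    · have hno : v₁ ≠ u₂ := fun e =>
        h1a ⟨u₁, v₁, v₂, hb₁, by omega, hm₁, by rw [e]; exact hm₂⟩
      omega
    · have hno : v₁ ≠ u₂ := fun e =>
        h2a ⟨u₁, v₁, v₂, hb₁, by omega, hm₁, by rw [e]; exact hm₂⟩
      omega
  · rintro ⟨i, j, k, l, hij, hjk, hkl, hc, hd, he⟩
    rcases key i k hc with ⟨u₁, v₁, hm₁, ha₁, hb₁, hc₁, hd₁, he₁, hf₁⟩ |
        ⟨u₁, v₁, hm₁, ha₁, hb₁, hc₁, hd₁, he₁, hf₁⟩ | ⟨he₁, hf₁⟩ <;>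
      rcases key j k hd with ⟨u₂, v₂, hm₂, ha₂, hb₂, hc₂, hd₂, he₂, hf₂⟩ |
        ⟨u₂, v₂, hm₂, ha₂, hb₂, hc₂, hd₂, he₂, hf₂⟩ | ⟨he₂, hf₂⟩ <;>
      rcases key j l he with ⟨u₃, v₃, hm₃, ha₃, hb₃, hc₃, hd₃, he₃, hf₃⟩ |
        ⟨u₃, v₃, hm₃, ha₃, hb₃, hc₃, hd₃, he₃, hf₃⟩ | ⟨he₃, hf₃⟩
    all_goals try omega
    · -- all three outer
      have hno : ¬(u₁ < u₂ ∧ v₁ = v₂ ∧ u₂ = u₃ ∧ v₂ < v₃) := by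
        rintro ⟨e1, e2, e3, e4⟩
        exact h1b ⟨u₁, u₂, v₂, v₃, e1, hb₂, e4, by rw [← e2]; exact hm₁, hm₂,
          by rw [e3]; exact hm₃⟩
      omega
    · -- c outer, d = c₀, e outer
      have hno : ¬(v₁ = s ∧ u₃ = s) := by
        rintro ⟨e1, e2⟩
        exact h1a ⟨u₁, s, v₃, by omega, by omega, by rw [← e1]; exact hm₁,
          by rw [← e2]; exact hm₃⟩
      omega
    · -- all three inner
      have hno : ¬(u₁ < u₂ ∧ v₁ = v₂ ∧ u₂ = u₃ ∧ v₂ < v₃) := by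
        rintro ⟨e1, e2, e3, e4⟩
        exact h2b ⟨u₁, u₂, v₂, v₃, e1, hb₂, e4, by rw [← e2]; exact hm₁, hm₂,
          by rw [e3]; exact hm₃⟩
      omega
end

section
/- Let n ≥ 3, let D ⊆ C_n be a gravity diagram, and let c = {p,q} ∈ D be residual in D. Set m = q−p+2 and n′ = n−q+p. Then: (a) every chord {k,l} ∈ D with {k,l} ≠ c satisfies exactly one of: p ≤ k and l ≤ q; or l < p; or k > q; or k ≤ p ≤ q ≤ l; (b) the inner diagram D_in = { {k−p+1, l−p+1} : {k,l} ∈ D, {k,l} ≠ c, p ≤ k, l ≤ q } is a gravity diagram in C_m; (c) the outer diagram D_out = { χ({k,l}) : {k,l} ∈ D, {k,l} ≠ c, not (p ≤ k and l ≤ q) }, where χ({k,l}) = {k,l} if l < p, χ({k,l}) = {k−(q−p), l−(q−p)} if k > q, and χ({k,l}) = {k, l−(q−p)} if k ≤ p ≤ q ≤ l, is a gravity diagram in C_{n′}. -/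
/-- Exactly one of four propositions holds. -/
def ExactlyOne4 (a b c d : Prop) : Prop :=
  (a ∨ b ∨ c ∨ d) ∧
  ¬(a ∧ b) ∧ ¬(a ∧ c) ∧ ¬(a ∧ d) ∧ ¬(b ∧ c) ∧ ¬(b ∧ d) ∧ ¬(c ∧ d)

/-- The relabelling map `χ` used to form the outer diagram when cutting along the
residual chord `{p, q}`. -/
def chiOuter (p q : ℕ) (x : ℕ × ℕ) : ℕ × ℕ :=
  if x.2 < p then x
  else if q < x.1 then (x.1 - (q - p), x.2 - (q - p))
  else (x.1, x.2 - (q - p))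


/-- Auxiliary relabelling map on individual labels. -/
def psiAux (p q t : ℕ) : ℕ := if t ≤ p then t else t - (q - p)

/-- cutting a gravity diagram along a residual chord `c = {p,q}` produces
two gravity diagrams (the inner one in `C_m`, `m = q - p + 2`, and the outer one in
`C_{n'}`, `n' = n - q + p`), and every other chord of the diagram lies in exactly one of
the four positions relative to `c`. -/
theorem cut_along_residual_chord (n p q : ℕ) (hn : 3 ≤ n)
    (D : Set (ℕ × ℕ)) (hD : IsGravitySet n D)
    (hc : (p, q) ∈ D) (hres : IsResidual D (p, q)) :
    (∀ k l : ℕ, (k, l) ∈ D → (k, l) ≠ (p, q) →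
      ExactlyOne4 (p ≤ k ∧ l ≤ q) (l < p) (q < k) (k ≤ p ∧ q ≤ l)) ∧
    IsGravitySet (q - p + 2)
      {x : ℕ × ℕ | ∃ k l : ℕ, (k, l) ∈ D ∧ (k, l) ≠ (p, q) ∧ p ≤ k ∧ l ≤ q ∧
        x = (k - (p - 1), l - (p - 1))} ∧
    IsGravitySet (n - q + p)
      {x : ℕ × ℕ | ∃ k l : ℕ, (k, l) ∈ D ∧ (k, l) ≠ (p, q) ∧ ¬(p ≤ k ∧ l ≤ q) ∧
        x = chiOuter p q (k, l)} := by

  obtain ⟨hmem, hg2, hg3⟩ := hD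
  have chordOf : ∀ a b : ℕ, (a, b) ∈ D →
      1 ≤ a ∧ a < b ∧ b ≤ n - 1 ∧ ¬(a = 1 ∧ b = n - 1) := fun a b h => hmem _ h
  obtain ⟨hp1, hpq, hqn, hpqne⟩ := chordOf p q hc
  have no_end_p : ∀ a, (a, p) ∈ D → False := fun a h =>
    hg2 ⟨a, p, q, (chordOf a p h).2.1, hpq, h, hc⟩
  have no_start_q : ∀ b, (q, b) ∈ D → False := fun b h =>
    hg2 ⟨p, q, b, hpq, (chordOf q b h).2.1, hc, h⟩
  have pos : ∀ k l, (k, l) ∈ D → ¬(k = p ∧ l = q) →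
      l < p ∨ q < k ∨ (p ≤ k ∧ l ≤ q) ∨ (k ≤ p ∧ q ≤ l) := by
    intro k l h hne
    have hkl := (chordOf k l h).2.1
    have hcross := hres _ h
    simp only [ChordCross] at hcross
    have hlp : l ≠ p := fun e => no_end_p k (e ▸ h)
    have hkq : k ≠ q := fun e => no_start_q l (e ▸ h)
    omega
  have psiLt : ∀ s t, (s ≤ p ∨ q ≤ s) → (t ≤ p ∨ q ≤ t) →
      psiAux p q s < psiAux p q t → s < t := by
    intro s t hs ht
    simp only [psiAux]
    split_ifs <;> omega
  have psiEq : ∀ s t, (s ≤ p ∨ q ≤ s) → (t ≤ p ∨ q ≤ t) →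
      psiAux p q s = psiAux p q t → s = t ∨ (s = p ∧ t = q) ∨ (s = q ∧ t = p) := by
    intro s t hs ht
    simp only [psiAux]
    split_ifs <;> omega
  have outmem : ∀ a b, (a, b) ∈ D → (a, b) ≠ (p, q) → ¬(p ≤ a ∧ b ≤ q) →
      (a ≤ p ∨ q < a) ∧ (b < p ∨ q ≤ b) ∧
        chiOuter p q (a, b) = (psiAux p q a, psiAux p q b) := by
    intro a b h hne hnin
    have hne' : ¬(a = p ∧ b = q) := fun h' => hne (by rw [h'.1, h'.2])
    have hab := (chordOf a b h).2.1
    have hcase := pos a b h hne'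
    have hS1 : a ≤ p ∨ q < a := by omega
    have hS2 : b < p ∨ q ≤ b := by omega
    refine ⟨hS1, hS2, ?_⟩
    simp only [chiOuter, psiAux]
    split_ifs <;> simp only [Prod.mk.injEq] <;> omega
  refine ⟨?_, ⟨?_, ?_, ?_⟩, ?_, ?_, ?_⟩
  · intro k l h hne
    have hne' : ¬(k = p ∧ l = q) := fun h' => hne (by rw [h'.1, h'.2])
    have hkl := (chordOf k l h).2.1
    have hcase := pos k l h hne'
    simp only [ExactlyOne4]
    omega
  · rintro ⟨i, j⟩ ⟨a, b, hab, hne, hpa, hbq, hx⟩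
    have hne' : ¬(a = p ∧ b = q) := fun h' => hne (by rw [h'.1, h'.2])
    obtain ⟨h1, h2, h3, h4⟩ := chordOf a b hab
    simp only [Prod.mk.injEq] at hx
    show 1 ≤ i ∧ i < j ∧ j ≤ (q - p + 2) - 1 ∧ ¬(i = 1 ∧ j = (q - p + 2) - 1)
    omega
  · rintro ⟨i, j, k, hij, hjk, ⟨a, b, hab, -, hpa, hbq, hx⟩, ⟨a2, b2, hab2, -, hpa2, hbq2, hy⟩⟩
    simp only [Prod.mk.injEq] at hx hy
    have h1 := (chordOf a b hab).2.1
    have h2 := (chordOf a2 b2 hab2).2.1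
    have hba : b = a2 := by omega
    exact hg2 ⟨a, b, b2, h1, by omega, hab, by rw [hba]; exact hab2⟩
  · rintro ⟨i, j, k, l, hij, hjk, hkl,
      ⟨a, c, hac, -, hpa, hcq, hx⟩, ⟨b, c2, hbc, -, hpb, hc2q, hy⟩, ⟨b2, d, hbd, -, hpb2, hdq, hz⟩⟩
    simp only [Prod.mk.injEq] at hx hy hz
    have h1 := (chordOf a c hac).2.1
    have h2 := (chordOf b c2 hbc).2.1
    have h3 := (chordOf b2 d hbd).2.1
    have hcc : c = c2 := by omega
    have hbb : b = b2 := by omega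
    exact hg3 ⟨a, b, c, d, by omega, by omega, by omega, hac,
      by rw [hcc]; exact hbc, by rw [hbb]; exact hbd⟩
  · rintro ⟨i, j⟩ ⟨a, b, hab, hne, hnin, hx⟩
    obtain ⟨hS1, hS2, hchi⟩ := outmem a b hab hne hnin
    rw [hchi] at hx
    simp only [Prod.mk.injEq] at hx
    obtain ⟨h1, h2, h3, h4⟩ := chordOf a b hab
    have hne' : ¬(a = p ∧ b = q) := fun h' => hne (by rw [h'.1, h'.2])
    show 1 ≤ i ∧ i < j ∧ j ≤ (n - q + p) - 1 ∧ ¬(i = 1 ∧ j = (n - q + p) - 1)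
    simp only [psiAux] at hx
    split_ifs at hx <;> omega
  · rintro ⟨i, j, k, hij, hjk, ⟨a, b, hab, hne1, hnin1, hx⟩, ⟨a2, b2, hab2, hne2, hnin2, hy⟩⟩
    obtain ⟨hSa, hSb, hchi1⟩ := outmem a b hab hne1 hnin1
    obtain ⟨hSa2, hSb2, hchi2⟩ := outmem a2 b2 hab2 hne2 hnin2
    rw [hchi1] at hx
    rw [hchi2] at hy
    simp only [Prod.mk.injEq] at hx hy
    have h1 := (chordOf a b hab).2.1
    have h2 := (chordOf a2 b2 hab2).2.1
    have e := psiEq b a2 (by omega) (by omega) (by omega)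
    rcases e with e | e | e
    · have hbb2 : b < b2 := psiLt b b2 (by omega) (by omega) (by omega)
      exact hg2 ⟨a, b, b2, h1, hbb2, hab, by rw [e]; exact hab2⟩
    · omega
    · have ha : a < p := by omega
      have hb2 : q < b2 := by omega
      exact hg3 ⟨a, p, q, b2, ha, hpq, hb2, by rw [← e.1]; exact hab, hc,
        by rw [← e.2]; exact hab2⟩
  · rintro ⟨i, j, k, l, hij, hjk, hkl,
      ⟨a, c, hac, hne1, hnin1, hx⟩, ⟨b, c2, hbc, hne2, hnin2, hy⟩, ⟨b2, d, hbd, hne3, hnin3, hz⟩⟩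
    obtain ⟨hSa, hSc, hchi1⟩ := outmem a c hac hne1 hnin1
    obtain ⟨hSb, hSc2, hchi2⟩ := outmem b c2 hbc hne2 hnin2
    obtain ⟨hSb2, hSd, hchi3⟩ := outmem b2 d hbd hne3 hnin3
    rw [hchi1] at hx
    rw [hchi2] at hy
    rw [hchi3] at hz
    simp only [Prod.mk.injEq] at hx hy hz
    have h1 := (chordOf a c hac).2.1
    have h2 := (chordOf b c2 hbc).2.1
    have h3 := (chordOf b2 d hbd).2.1
    have ec := psiEq c c2 (by omega) (by omega) (by omega)
    have eb := psiEq b b2 (by omega) (by omega) (by omega)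
    have hcc : c = c2 := by omega
    have hbb : b = b2 := by omega
    have hab' : a < b := psiLt a b (by omega) (by omega) (by omega)
    have hbc' : b < c := psiLt b c (by omega) (by omega) (by omega)
    have hcd : c < d := psiLt c d (by omega) (by omega) (by omega)
    exact hg3 ⟨a, b, c, d, hab', hbc', hcd, hac,
      by rw [hcc]; exact hbc, by rw [hbb]; exact hbd⟩
end

section
/- Let n, m ≥ 3, let 1 ≤ s ≤ n−1 and let c₀ = {s, s+m−2} ∈ C_{n+m−2}. The grafting map (D₁, D₂) ↦ φ¹(D₁) ∪ φ²(D₂) ∪ {c₀} is a bijection from the set of pairs (D₁, D₂), with D₁ a gravity diagram in C_n and D₂ a gravity diagram in C_m, onto the set of gravity diagrams D ⊆ C_{n+m−2} such that c₀ ∈ D and c₀ is residual in D. -/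
private lemma phiOuter_cases {s m a b x y : ℕ} (h : phiOuter s m (a, b) = (x, y)) :
    (b < s ∧ x = a ∧ y = b) ∨ (s ≤ b ∧ a ≤ s ∧ x = a ∧ y = b + (m - 2)) ∨
      (s ≤ b ∧ s < a ∧ x = a + (m - 2) ∧ y = b + (m - 2)) := by
  simp only [phiOuter] at h
  split_ifs at h <;> simp_all [Prod.ext_iff] <;> omega


private lemma phiInner_cases {s a b x y : ℕ} (h : phiInner s (a, b) = (x, y)) :
    x = a + (s - 1) ∧ y = b + (s - 1) := by
  simp only [phiInner, Prod.ext_iff] at h; exact ⟨h.1.symm, h.2.symm⟩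

private lemma mem_graft_iff {s m : ℕ} {D₁ D₂ : Set (ℕ × ℕ)} {d : ℕ × ℕ} :
    d ∈ graft s m D₁ D₂ ↔
      (∃ p ∈ D₁, phiOuter s m p = d) ∨ (∃ p ∈ D₂, phiInner s p = d) ∨
        d = (s, s + (m - 2)) := by
  simp only [graft, Set.mem_union, Set.mem_image, Set.mem_singleton_iff]
  constructor
  · rintro ((⟨p, hp, he⟩ | ⟨p, hp, he⟩) | h)
    · exact Or.inl ⟨p, hp, he⟩
    · exact Or.inr (Or.inl ⟨p, hp, he⟩)
    · exact Or.inr (Or.inr h)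
  · rintro (⟨p, hp, he⟩ | ⟨p, hp, he⟩ | h)
    · exact Or.inl (Or.inl ⟨p, hp, he⟩)
    · exact Or.inl (Or.inr ⟨p, hp, he⟩)
    · exact Or.inr h

private lemma phiOuter_ss {s m : ℕ} : phiOuter s m (s, s) = (s, s + (m - 2)) := by
  simp [phiOuter]

private lemma mem_graft_iff' {s m : ℕ} {D₁ D₂ : Set (ℕ × ℕ)} {d : ℕ × ℕ} :
    d ∈ graft s m D₁ D₂ ↔
      (∃ p ∈ insert (s, s) D₁, phiOuter s m p = d) ∨ (∃ p ∈ D₂, phiInner s p = d) := by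
  rw [mem_graft_iff]
  constructor
  · rintro (⟨p, hp, he⟩ | ⟨p, hp, he⟩ | rfl)
    · exact Or.inl ⟨p, Set.mem_insert_of_mem _ hp, he⟩
    · exact Or.inr ⟨p, hp, he⟩
    · exact Or.inl ⟨(s, s), Set.mem_insert _ _, phiOuter_ss⟩
  · rintro (⟨p, hp, he⟩ | ⟨p, hp, he⟩)
    · rcases Set.mem_insert_iff.1 hp with rfl | hp'
      · exact Or.inr (Or.inr (by rw [← he, phiOuter_ss]))
      · exact Or.inl ⟨p, hp', he⟩
    · exact Or.inr (Or.inl ⟨p, hp, he⟩)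

private lemma phiOuter_inj {s m : ℕ} (hm : 3 ≤ m) {a1 b1 a2 b2 : ℕ}
    (h1 : a1 < b1) (h2 : a2 < b2)
    (he : phiOuter s m (a1, b1) = phiOuter s m (a2, b2)) : a1 = a2 ∧ b1 = b2 := by
  rcases hx : phiOuter s m (a2, b2) with ⟨x, y⟩
  have d1 := phiOuter_cases (hx ▸ he)
  have d2 := phiOuter_cases hx
  omega

private lemma graft_gravity {n m s : ℕ} (hn : 3 ≤ n) (hm : 3 ≤ m) (hs1 : 1 ≤ s)
    (hs2 : s ≤ n - 1) {D₁ D₂ : Set (ℕ × ℕ)}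
    (h₁ : IsGravitySet n D₁) (h₂ : IsGravitySet m D₂) :
    IsGravitySet (n + m - 2) (graft s m D₁ D₂) := by
  have hE : ∀ p ∈ insert (s, s) D₁, 1 ≤ p.1 ∧ p.1 ≤ p.2 ∧ p.2 ≤ n - 1 ∧
      ¬(p.1 = 1 ∧ p.2 = n - 1) ∧ (p.1 = p.2 → p.1 = s) := by
    intro p hp
    rcases Set.mem_insert_iff.1 hp with rfl | hp'
    · show 1 ≤ s ∧ s ≤ s ∧ s ≤ n - 1 ∧ ¬(s = 1 ∧ s = n - 1) ∧ (s = s → s = s)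
      omega
    · have h := h₁.1 p hp'
      unfold ChordP at h
      omega
  refine ⟨?_, ?_, ?_⟩
  · rintro ⟨x, y⟩ hd
    rcases mem_graft_iff'.1 hd with ⟨⟨a, b⟩, hp, he⟩ | ⟨⟨a, b⟩, hp, he⟩
    · have hb : 1 ≤ a ∧ a ≤ b ∧ b ≤ n - 1 ∧ ¬(a = 1 ∧ b = n - 1) ∧ (a = b → a = s) :=
        hE _ hp
      have d1 := phiOuter_cases he
      show 1 ≤ x ∧ x < y ∧ y ≤ n + m - 2 - 1 ∧ ¬(x = 1 ∧ y = n + m - 2 - 1)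
      omega
    · have hb : 1 ≤ a ∧ a < b ∧ b ≤ m - 1 ∧ ¬(a = 1 ∧ b = m - 1) := h₂.1 _ hp
      have d1 := phiInner_cases he
      show 1 ≤ x ∧ x < y ∧ y ≤ n + m - 2 - 1 ∧ ¬(x = 1 ∧ y = n + m - 2 - 1)
      omega
  · rintro ⟨i, j, k, hij, hjk, hm1, hm2⟩
    rcases mem_graft_iff'.1 hm1 with ⟨⟨a1, b1⟩, hp1, he1⟩ | ⟨⟨a1, b1⟩, hp1, he1⟩ <;>
      rcases mem_graft_iff'.1 hm2 with ⟨⟨a2, b2⟩, hp2, he2⟩ | ⟨⟨a2, b2⟩, hp2, he2⟩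
    · -- outer, outer
      have hb1 : 1 ≤ a1 ∧ a1 ≤ b1 ∧ b1 ≤ n - 1 ∧ ¬(a1 = 1 ∧ b1 = n - 1) ∧ (a1 = b1 → a1 = s) :=
        hE _ hp1
      have hb2 : 1 ≤ a2 ∧ a2 ≤ b2 ∧ b2 ≤ n - 1 ∧ ¬(a2 = 1 ∧ b2 = n - 1) ∧ (a2 = b2 → a2 = s) :=
        hE _ hp2
      have d1 := phiOuter_cases he1
      have d2 := phiOuter_cases he2
      have hba : b1 = a2 ∧ ¬ b1 = s := by omega
      simp only [Set.mem_insert_iff, Prod.mk.injEq] at hp1 hp2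
      rcases hp1 with ⟨h1e, h2e⟩ | hp1
      · omega
      rcases hp2 with ⟨h1e, h2e⟩ | hp2
      · omega
      exact h₁.2.1 ⟨a1, b1, b2, by omega, by omega, hp1, by simpa [hba.1] using hp2⟩
    · -- outer, inner
      have hb1 : 1 ≤ a1 ∧ a1 ≤ b1 ∧ b1 ≤ n - 1 ∧ ¬(a1 = 1 ∧ b1 = n - 1) ∧ (a1 = b1 → a1 = s) :=
        hE _ hp1
      have hb2 : 1 ≤ a2 ∧ a2 < b2 ∧ b2 ≤ m - 1 ∧ ¬(a2 = 1 ∧ b2 = m - 1) := h₂.1 _ hp2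
      have d1 := phiOuter_cases he1
      have d2 := phiInner_cases he2
      omega
    · -- inner, outer
      have hb1 : 1 ≤ a1 ∧ a1 < b1 ∧ b1 ≤ m - 1 ∧ ¬(a1 = 1 ∧ b1 = m - 1) := h₂.1 _ hp1
      have hb2 : 1 ≤ a2 ∧ a2 ≤ b2 ∧ b2 ≤ n - 1 ∧ ¬(a2 = 1 ∧ b2 = n - 1) ∧ (a2 = b2 → a2 = s) :=
        hE _ hp2
      have d1 := phiInner_cases he1
      have d2 := phiOuter_cases he2
      omega
    · -- inner, inner
      have hb1 : 1 ≤ a1 ∧ a1 < b1 ∧ b1 ≤ m - 1 ∧ ¬(a1 = 1 ∧ b1 = m - 1) := h₂.1 _ hp1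
      have hb2 : 1 ≤ a2 ∧ a2 < b2 ∧ b2 ≤ m - 1 ∧ ¬(a2 = 1 ∧ b2 = m - 1) := h₂.1 _ hp2
      have d1 := phiInner_cases he1
      have d2 := phiInner_cases he2
      have hba : b1 = a2 := by omega
      exact h₂.2.1 ⟨a1, b1, b2, by omega, by omega, hp1, by simpa [hba] using hp2⟩
  · rintro ⟨i, j, k, l, hij, hjk, hkl, hm1, hm2, hm3⟩
    rcases mem_graft_iff'.1 hm1 with ⟨⟨a1, b1⟩, hp1, he1⟩ | ⟨⟨a1, b1⟩, hp1, he1⟩ <;>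
      rcases mem_graft_iff'.1 hm2 with ⟨⟨a2, b2⟩, hp2, he2⟩ | ⟨⟨a2, b2⟩, hp2, he2⟩ <;>
        rcases mem_graft_iff'.1 hm3 with ⟨⟨a3, b3⟩, hp3, he3⟩ | ⟨⟨a3, b3⟩, hp3, he3⟩
    · -- OOO
      have hb1 : 1 ≤ a1 ∧ a1 ≤ b1 ∧ b1 ≤ n - 1 ∧ ¬(a1 = 1 ∧ b1 = n - 1) ∧ (a1 = b1 → a1 = s) :=
        hE _ hp1
      have hb2 : 1 ≤ a2 ∧ a2 ≤ b2 ∧ b2 ≤ n - 1 ∧ ¬(a2 = 1 ∧ b2 = n - 1) ∧ (a2 = b2 → a2 = s) :=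
        hE _ hp2
      have hb3 : 1 ≤ a3 ∧ a3 ≤ b3 ∧ b3 ≤ n - 1 ∧ ¬(a3 = 1 ∧ b3 = n - 1) ∧ (a3 = b3 → a3 = s) :=
        hE _ hp3
      have d1 := phiOuter_cases he1
      have d2 := phiOuter_cases he2
      have d3 := phiOuter_cases he3
      have key : b1 = b2 ∧ a2 = a3 := by omega
      simp only [Set.mem_insert_iff, Prod.mk.injEq] at hp1 hp2 hp3
      rcases hp1 with ⟨h1e, h1e'⟩ | hp1
      · omega
      rcases hp3 with ⟨h3e, h3e'⟩ | hp3
      · omega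
      rcases hp2 with ⟨h2e, h2e'⟩ | hp2
      · -- middle is the virtual chord (s,s): reduces to condition 2 in D₁
        exact h₁.2.1 ⟨a1, s, b3, by omega, by omega,
          by simpa [show b1 = s by omega] using hp1,
          by simpa [show a3 = s by omega] using hp3⟩
      · have hc2 : 1 ≤ a2 ∧ a2 < b2 ∧ b2 ≤ n - 1 ∧ ¬(a2 = 1 ∧ b2 = n - 1) := h₁.1 _ hp2
        exact h₁.2.2 ⟨a1, a2, b2, b3, by omega, by omega, by omega,
          by simpa [key.1] using hp1, hp2, by simpa [key.2.symm] using hp3⟩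
    · -- OOI
      have hb1 : 1 ≤ a1 ∧ a1 ≤ b1 ∧ b1 ≤ n - 1 ∧ ¬(a1 = 1 ∧ b1 = n - 1) ∧ (a1 = b1 → a1 = s) :=
        hE _ hp1
      have hb2 : 1 ≤ a2 ∧ a2 ≤ b2 ∧ b2 ≤ n - 1 ∧ ¬(a2 = 1 ∧ b2 = n - 1) ∧ (a2 = b2 → a2 = s) :=
        hE _ hp2
      have hb3 : 1 ≤ a3 ∧ a3 < b3 ∧ b3 ≤ m - 1 ∧ ¬(a3 = 1 ∧ b3 = m - 1) := h₂.1 _ hp3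
      have d1 := phiOuter_cases he1
      have d2 := phiOuter_cases he2
      have d3 := phiInner_cases he3
      omega
    · -- OIO
      have hb1 : 1 ≤ a1 ∧ a1 ≤ b1 ∧ b1 ≤ n - 1 ∧ ¬(a1 = 1 ∧ b1 = n - 1) ∧ (a1 = b1 → a1 = s) :=
        hE _ hp1
      have hb2 : 1 ≤ a2 ∧ a2 < b2 ∧ b2 ≤ m - 1 ∧ ¬(a2 = 1 ∧ b2 = m - 1) := h₂.1 _ hp2
      have hb3 : 1 ≤ a3 ∧ a3 ≤ b3 ∧ b3 ≤ n - 1 ∧ ¬(a3 = 1 ∧ b3 = n - 1) ∧ (a3 = b3 → a3 = s) :=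
        hE _ hp3
      have d1 := phiOuter_cases he1
      have d2 := phiInner_cases he2
      have d3 := phiOuter_cases he3
      omega
    · -- OII
      have hb1 : 1 ≤ a1 ∧ a1 ≤ b1 ∧ b1 ≤ n - 1 ∧ ¬(a1 = 1 ∧ b1 = n - 1) ∧ (a1 = b1 → a1 = s) :=
        hE _ hp1
      have hb2 : 1 ≤ a2 ∧ a2 < b2 ∧ b2 ≤ m - 1 ∧ ¬(a2 = 1 ∧ b2 = m - 1) := h₂.1 _ hp2
      have hb3 : 1 ≤ a3 ∧ a3 < b3 ∧ b3 ≤ m - 1 ∧ ¬(a3 = 1 ∧ b3 = m - 1) := h₂.1 _ hp3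
      have d1 := phiOuter_cases he1
      have d2 := phiInner_cases he2
      have d3 := phiInner_cases he3
      omega
    · -- IOO
      have hb1 : 1 ≤ a1 ∧ a1 < b1 ∧ b1 ≤ m - 1 ∧ ¬(a1 = 1 ∧ b1 = m - 1) := h₂.1 _ hp1
      have hb2 : 1 ≤ a2 ∧ a2 ≤ b2 ∧ b2 ≤ n - 1 ∧ ¬(a2 = 1 ∧ b2 = n - 1) ∧ (a2 = b2 → a2 = s) :=
        hE _ hp2
      have hb3 : 1 ≤ a3 ∧ a3 ≤ b3 ∧ b3 ≤ n - 1 ∧ ¬(a3 = 1 ∧ b3 = n - 1) ∧ (a3 = b3 → a3 = s) :=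
        hE _ hp3
      have d1 := phiInner_cases he1
      have d2 := phiOuter_cases he2
      have d3 := phiOuter_cases he3
      omega
    · -- IOI
      have hb1 : 1 ≤ a1 ∧ a1 < b1 ∧ b1 ≤ m - 1 ∧ ¬(a1 = 1 ∧ b1 = m - 1) := h₂.1 _ hp1
      have hb2 : 1 ≤ a2 ∧ a2 ≤ b2 ∧ b2 ≤ n - 1 ∧ ¬(a2 = 1 ∧ b2 = n - 1) ∧ (a2 = b2 → a2 = s) :=
        hE _ hp2
      have hb3 : 1 ≤ a3 ∧ a3 < b3 ∧ b3 ≤ m - 1 ∧ ¬(a3 = 1 ∧ b3 = m - 1) := h₂.1 _ hp3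
      have d1 := phiInner_cases he1
      have d2 := phiOuter_cases he2
      have d3 := phiInner_cases he3
      omega
    · -- IIO
      have hb1 : 1 ≤ a1 ∧ a1 < b1 ∧ b1 ≤ m - 1 ∧ ¬(a1 = 1 ∧ b1 = m - 1) := h₂.1 _ hp1
      have hb2 : 1 ≤ a2 ∧ a2 < b2 ∧ b2 ≤ m - 1 ∧ ¬(a2 = 1 ∧ b2 = m - 1) := h₂.1 _ hp2
      have hb3 : 1 ≤ a3 ∧ a3 ≤ b3 ∧ b3 ≤ n - 1 ∧ ¬(a3 = 1 ∧ b3 = n - 1) ∧ (a3 = b3 → a3 = s) :=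
        hE _ hp3
      have d1 := phiInner_cases he1
      have d2 := phiInner_cases he2
      have d3 := phiOuter_cases he3
      omega
    · -- III
      have hb1 : 1 ≤ a1 ∧ a1 < b1 ∧ b1 ≤ m - 1 ∧ ¬(a1 = 1 ∧ b1 = m - 1) := h₂.1 _ hp1
      have hb2 : 1 ≤ a2 ∧ a2 < b2 ∧ b2 ≤ m - 1 ∧ ¬(a2 = 1 ∧ b2 = m - 1) := h₂.1 _ hp2
      have hb3 : 1 ≤ a3 ∧ a3 < b3 ∧ b3 ≤ m - 1 ∧ ¬(a3 = 1 ∧ b3 = m - 1) := h₂.1 _ hp3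
      have d1 := phiInner_cases he1
      have d2 := phiInner_cases he2
      have d3 := phiInner_cases he3
      have key : b1 = b2 ∧ a2 = a3 := by omega
      exact h₂.2.2 ⟨a1, a2, b2, b3, by omega, by omega, by omega,
        by simpa [key.1] using hp1, hp2, by simpa [key.2.symm] using hp3⟩

private lemma back_gravity₁ {n m s : ℕ} (hn : 3 ≤ n) (hm : 3 ≤ m) (hs1 : 1 ≤ s)
    (hs2 : s ≤ n - 1) {D : Set (ℕ × ℕ)} (hD : IsGravitySet (n + m - 2) D)
    (hc : (s, s + (m - 2)) ∈ D) :
    IsGravitySet n {p | ChordP n p ∧ phiOuter s m p ∈ D} := by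
  refine ⟨fun p hp => hp.1, ?_, ?_⟩
  · rintro ⟨i, j, k, hij, hjk, ⟨hc1, hm1⟩, ⟨hc2, hm2⟩⟩
    obtain ⟨q1, r1, hq1⟩ : ∃ q r, phiOuter s m (i, j) = (q, r) := ⟨_, _, rfl⟩
    obtain ⟨q2, r2, hq2⟩ : ∃ q r, phiOuter s m (j, k) = (q, r) := ⟨_, _, rfl⟩
    rw [hq1] at hm1; rw [hq2] at hm2
    have d1 := phiOuter_cases hq1
    have d2 := phiOuter_cases hq2
    by_cases hjs : j = s
    · -- use condition 3 of D with the middle chord c₀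
      rw [show r1 = s + (m - 2) by omega] at hm1
      rw [show q2 = s by omega] at hm2
      exact hD.2.2 ⟨q1, s, s + (m - 2), r2, by omega, by omega, by omega, hm1, hc, hm2⟩
    · rw [show r1 = q2 by omega] at hm1
      exact hD.2.1 ⟨q1, q2, r2, by omega, by omega, hm1, hm2⟩
  · rintro ⟨i, j, k, l, hij, hjk, hkl, ⟨hc1, hm1⟩, ⟨hc2, hm2⟩, ⟨hc3, hm3⟩⟩
    obtain ⟨q1, r1, hq1⟩ : ∃ q r, phiOuter s m (i, k) = (q, r) := ⟨_, _, rfl⟩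
    obtain ⟨q2, r2, hq2⟩ : ∃ q r, phiOuter s m (j, k) = (q, r) := ⟨_, _, rfl⟩
    obtain ⟨q3, r3, hq3⟩ : ∃ q r, phiOuter s m (j, l) = (q, r) := ⟨_, _, rfl⟩
    rw [hq1] at hm1; rw [hq2] at hm2; rw [hq3] at hm3
    have d1 := phiOuter_cases hq1
    have d2 := phiOuter_cases hq2
    have d3 := phiOuter_cases hq3
    rw [show r1 = r2 by omega] at hm1
    rw [show q3 = q2 by omega] at hm3
    exact hD.2.2 ⟨q1, q2, r2, r3, by omega, by omega, by omega, hm1, hm2, hm3⟩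

private lemma back_gravity₂ {n m s : ℕ} (hn : 3 ≤ n) (hm : 3 ≤ m) (hs1 : 1 ≤ s)
    (hs2 : s ≤ n - 1) {D : Set (ℕ × ℕ)} (hD : IsGravitySet (n + m - 2) D) :
    IsGravitySet m {p | ChordP m p ∧ phiInner s p ∈ D} := by
  refine ⟨fun p hp => hp.1, ?_, ?_⟩
  · rintro ⟨i, j, k, hij, hjk, ⟨hc1, hm1⟩, ⟨hc2, hm2⟩⟩
    have e1 : phiInner s (i, j) = (i + (s - 1), j + (s - 1)) := rfl
    have e2 : phiInner s (j, k) = (j + (s - 1), k + (s - 1)) := rfl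
    rw [e1] at hm1; rw [e2] at hm2
    exact hD.2.1 ⟨i + (s - 1), j + (s - 1), k + (s - 1), by omega, by omega, hm1, hm2⟩
  · rintro ⟨i, j, k, l, hij, hjk, hkl, ⟨hc1, hm1⟩, ⟨hc2, hm2⟩, ⟨hc3, hm3⟩⟩
    have e1 : phiInner s (i, k) = (i + (s - 1), k + (s - 1)) := rfl
    have e2 : phiInner s (j, k) = (j + (s - 1), k + (s - 1)) := rfl
    have e3 : phiInner s (j, l) = (j + (s - 1), l + (s - 1)) := rfl
    rw [e1] at hm1; rw [e2] at hm2; rw [e3] at hm3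
    exact hD.2.2 ⟨i + (s - 1), j + (s - 1), k + (s - 1), l + (s - 1),
      by omega, by omega, by omega, hm1, hm2, hm3⟩

private lemma back_eq {n m s : ℕ} (hn : 3 ≤ n) (hm : 3 ≤ m) (hs1 : 1 ≤ s)
    (hs2 : s ≤ n - 1) {D : Set (ℕ × ℕ)} (hD : IsGravitySet (n + m - 2) D)
    (hc : (s, s + (m - 2)) ∈ D) (hres : IsResidual D (s, s + (m - 2))) :
    graft s m {p | ChordP n p ∧ phiOuter s m p ∈ D}
      {p | ChordP m p ∧ phiInner s p ∈ D} = D := by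
  apply Set.Subset.antisymm
  · intro d hd
    rcases mem_graft_iff.1 hd with ⟨p, hp, he⟩ | ⟨p, hp, he⟩ | rfl
    · exact he ▸ hp.2
    · exact he ▸ hp.2
    · exact hc
  · rintro ⟨x, y⟩ hd
    have hch : 1 ≤ x ∧ x < y ∧ y ≤ n + m - 2 - 1 ∧ ¬(x = 1 ∧ y = n + m - 2 - 1) :=
      hD.1 _ hd
    have hnc := hres _ hd
    have hnc' : ¬((x < s ∧ s ≤ y ∧ y < s + (m - 2)) ∨
        (s < x ∧ x ≤ s + (m - 2) ∧ s + (m - 2) < y)) := hnc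
    rw [mem_graft_iff]
    by_cases hc0 : (x, y) = (s, s + (m - 2))
    · exact Or.inr (Or.inr hc0)
    have hc0' : ¬(x = s ∧ y = s + (m - 2)) := by
      intro h; exact hc0 (by simp [h.1, h.2])
    by_cases h1 : y < s
    · -- outer, untouched
      refine Or.inl ⟨(x, y), ⟨?_, ?_⟩, ?_⟩
      · show 1 ≤ x ∧ x < y ∧ y ≤ n - 1 ∧ ¬(x = 1 ∧ y = n - 1)
        omega
      · have : phiOuter s m (x, y) = (x, y) := by
          simp only [phiOuter]
          split_ifs <;> simp [Prod.ext_iff] <;> omega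
        rwa [this]
      · simp only [phiOuter]
        split_ifs <;> simp [Prod.ext_iff] <;> omega
    by_cases h2 : s ≤ x ∧ y ≤ s + (m - 2)
    · -- inner
      refine Or.inr (Or.inl ⟨(x - (s - 1), y - (s - 1)), ⟨?_, ?_⟩, ?_⟩)
      · show 1 ≤ x - (s - 1) ∧ x - (s - 1) < y - (s - 1) ∧ y - (s - 1) ≤ m - 1 ∧
          ¬(x - (s - 1) = 1 ∧ y - (s - 1) = m - 1)
        omega
      · have : phiInner s (x - (s - 1), y - (s - 1)) = (x, y) := by
          simp only [phiInner, Prod.ext_iff]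
          omega
        rwa [this]
      · simp only [phiInner, Prod.ext_iff]
        omega
    by_cases h3 : x ≤ s
    · -- outer, straddling: y ≥ s + (m-2)
      refine Or.inl ⟨(x, y - (m - 2)), ⟨?_, ?_⟩, ?_⟩
      · show 1 ≤ x ∧ x < y - (m - 2) ∧ y - (m - 2) ≤ n - 1 ∧ ¬(x = 1 ∧ y - (m - 2) = n - 1)
        omega
      · have : phiOuter s m (x, y - (m - 2)) = (x, y) := by
          simp only [phiOuter]
          split_ifs <;> simp [Prod.ext_iff] <;> omega
        rwa [this]
      · simp only [phiOuter]
        split_ifs <;> simp [Prod.ext_iff] <;> omega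
    · -- outer, fully to the right: x > s + (m-2)
      refine Or.inl ⟨(x - (m - 2), y - (m - 2)), ⟨?_, ?_⟩, ?_⟩
      · show 1 ≤ x - (m - 2) ∧ x - (m - 2) < y - (m - 2) ∧ y - (m - 2) ≤ n - 1 ∧
          ¬(x - (m - 2) = 1 ∧ y - (m - 2) = n - 1)
        omega
      · have : phiOuter s m (x - (m - 2), y - (m - 2)) = (x, y) := by
          simp only [phiOuter]
          split_ifs <;> simp [Prod.ext_iff] <;> omega
        rwa [this]
      · simp only [phiOuter]
        split_ifs <;> simp [Prod.ext_iff] <;> omega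

private lemma graft_inj₁ {n m s : ℕ} (hm : 3 ≤ m) (hs1 : 1 ≤ s)
    {D₁ D₂ D₁' D₂' : Set (ℕ × ℕ)}
    (h₁ : ∀ p ∈ D₁, ChordP n p) (h₁' : ∀ p ∈ D₁', ChordP n p)
    (h₂' : ∀ p ∈ D₂', ChordP m p)
    (heq : graft s m D₁ D₂ = graft s m D₁' D₂') : D₁ ⊆ D₁' := by
  rintro ⟨a, b⟩ hp
  have hcp : 1 ≤ a ∧ a < b ∧ b ≤ n - 1 ∧ ¬(a = 1 ∧ b = n - 1) := h₁ _ hp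
  have hmem : phiOuter s m (a, b) ∈ graft s m D₁' D₂' :=
    heq ▸ mem_graft_iff.2 (Or.inl ⟨(a, b), hp, rfl⟩)
  rcases mem_graft_iff.1 hmem with ⟨⟨a', b'⟩, hq, he⟩ | ⟨⟨a', b'⟩, hq, he⟩ | he
  · have hcq : 1 ≤ a' ∧ a' < b' ∧ b' ≤ n - 1 ∧ ¬(a' = 1 ∧ b' = n - 1) := h₁' _ hq
    obtain ⟨rfl, rfl⟩ := phiOuter_inj hm hcq.2.1 hcp.2.1 he
    exact hq
  · have hcq : 1 ≤ a' ∧ a' < b' ∧ b' ≤ m - 1 ∧ ¬(a' = 1 ∧ b' = m - 1) := h₂' _ hq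
    rcases hx : phiOuter s m (a, b) with ⟨x, y⟩
    rw [hx] at he
    have d1 := phiOuter_cases hx
    have d2 := phiInner_cases he
    exact absurd rfl (by omega : ¬ (0 : ℕ) = 0)
  · have d1 := phiOuter_cases he
    exact absurd rfl (by omega : ¬ (0 : ℕ) = 0)

private lemma graft_inj₂ {n m s : ℕ} (hm : 3 ≤ m) (hs1 : 1 ≤ s)
    {D₁ D₂ D₁' D₂' : Set (ℕ × ℕ)}
    (h₂ : ∀ p ∈ D₂, ChordP m p) (h₁' : ∀ p ∈ D₁', ChordP n p)
    (h₂' : ∀ p ∈ D₂', ChordP m p)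
    (heq : graft s m D₁ D₂ = graft s m D₁' D₂') : D₂ ⊆ D₂' := by
  rintro ⟨a, b⟩ hp
  have hcp : 1 ≤ a ∧ a < b ∧ b ≤ m - 1 ∧ ¬(a = 1 ∧ b = m - 1) := h₂ _ hp
  have hmem : phiInner s (a, b) ∈ graft s m D₁' D₂' :=
    heq ▸ mem_graft_iff.2 (Or.inr (Or.inl ⟨(a, b), hp, rfl⟩))
  rcases mem_graft_iff.1 hmem with ⟨⟨a', b'⟩, hq, he⟩ | ⟨⟨a', b'⟩, hq, he⟩ | he
  · have hcq : 1 ≤ a' ∧ a' < b' ∧ b' ≤ n - 1 ∧ ¬(a' = 1 ∧ b' = n - 1) := h₁' _ hq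
    rcases hx : phiOuter s m (a', b') with ⟨x, y⟩
    rw [hx] at he
    have d1 := phiOuter_cases hx
    have d2 := phiInner_cases he.symm
    exact absurd rfl (by omega : ¬ (0 : ℕ) = 0)
  · have hcq : 1 ≤ a' ∧ a' < b' ∧ b' ≤ m - 1 ∧ ¬(a' = 1 ∧ b' = m - 1) := h₂' _ hq
    have d2 := phiInner_cases (x := a + (s - 1)) (y := b + (s - 1)) (he.trans rfl)
    obtain ⟨rfl, rfl⟩ : a' = a ∧ b' = b := by omega
    exact hq
  · have d2 := phiInner_cases (x := s) (y := s + (m - 2)) he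
    exact absurd rfl (by omega : ¬ (0 : ℕ) = 0)

/-- the grafting map is a bijection from the set of pairs of gravity
diagrams `(D₁, D₂)`, `D₁ ⊆ C_n`, `D₂ ⊆ C_m`, onto the set of gravity diagrams
`D ⊆ C_{n+m-2}` containing the chord `c₀ = {s, s+m-2}` as a residual chord. -/
theorem graft_bijective (n m s : ℕ) (hn : 3 ≤ n) (hm : 3 ≤ m)
    (hs1 : 1 ≤ s) (hs2 : s ≤ n - 1) :
    Set.BijOn (fun DD : Set (ℕ × ℕ) × Set (ℕ × ℕ) => graft s m DD.1 DD.2)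
      ({D | IsGravitySet n D} ×ˢ {D | IsGravitySet m D})
      {D | IsGravitySet (n + m - 2) D ∧ (s, s + (m - 2)) ∈ D ∧
        IsResidual D (s, s + (m - 2))} := by
  refine ⟨?_, ?_, ?_⟩
  · -- MapsTo
    rintro ⟨D₁, D₂⟩ hDD
    simp only [Set.mem_prod, Set.mem_setOf_eq] at hDD
    refine ⟨graft_gravity hn hm hs1 hs2 hDD.1 hDD.2, ?_, ?_⟩
    · exact mem_graft_iff.2 (Or.inr (Or.inr rfl))
    · rintro ⟨x, y⟩ hd hcross
      have hcross' : (x < s ∧ s ≤ y ∧ y < s + (m - 2)) ∨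
          (s < x ∧ x ≤ s + (m - 2) ∧ s + (m - 2) < y) := hcross
      rcases mem_graft_iff.1 hd with ⟨⟨a, b⟩, hp, he⟩ | ⟨⟨a, b⟩, hp, he⟩ | he
      · have hb : 1 ≤ a ∧ a < b ∧ b ≤ n - 1 ∧ ¬(a = 1 ∧ b = n - 1) := hDD.1.1 _ hp
        have d1 := phiOuter_cases he
        omega
      · have hb : 1 ≤ a ∧ a < b ∧ b ≤ m - 1 ∧ ¬(a = 1 ∧ b = m - 1) := hDD.2.1 _ hp
        have d1 := phiInner_cases he
        omega
      · have : x = s ∧ y = s + (m - 2) := by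
          have := congrArg Prod.fst he
          have := congrArg Prod.snd he
          simp_all
        omega
  · -- InjOn
    rintro ⟨D₁, D₂⟩ h1 ⟨D₁', D₂'⟩ h2 heq
    simp only [Set.mem_prod, Set.mem_setOf_eq] at h1 h2
    have heq' : graft s m D₁ D₂ = graft s m D₁' D₂' := heq
    have e1 : D₁ = D₁' :=
      Set.Subset.antisymm (graft_inj₁ hm hs1 h1.1.1 h2.1.1 h2.2.1 heq')
        (graft_inj₁ hm hs1 h2.1.1 h1.1.1 h1.2.1 heq'.symm)
    have e2 : D₂ = D₂' :=
      Set.Subset.antisymm (graft_inj₂ hm hs1 h1.2.1 h2.1.1 h2.2.1 heq')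
        (graft_inj₂ hm hs1 h2.2.1 h1.1.1 h1.2.1 heq'.symm)
    simp [Prod.mk.injEq, e1, e2]
  · -- SurjOn
    rintro D ⟨hg, hc, hres⟩
    refine ⟨({p | ChordP n p ∧ phiOuter s m p ∈ D}, {p | ChordP m p ∧ phiInner s p ∈ D}),
      ?_, ?_⟩
    · exact ⟨back_gravity₁ hn hm hs1 hs2 hg hc, back_gravity₂ hn hm hs1 hs2 hg⟩
    · exact back_eq hn hm hs1 hs2 hg hc hres
end

section
/- Let R be a commutative ring, N ≥ 1, and let ⪯ be a monomial order on the polynomial ring R[x_1,…,x_N] such that the monomial x_i is strictly smaller than x_j whenever i < j. Let u be the R-algebra endomorphism of R[x_1,…,x_N] determined by u(x_j) = x_j + Σ_{i<j} g_{ij} x_i for some scalars g_{ij} ∈ R. Then for every nonzero polynomial f, the polynomial u(f) is nonzero, the ⪯-largest monomial occurring in u(f) equals the ⪯-largest monomial occurring in f, and the leading coefficients of u(f) and f coincide; in short, the initial term of u(f) equals the initial term of f. -/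
/-!
Each `u (X j)` lies in the span of the monomials `⪯ x_j` and has coefficient `1` at `x_j`.
Since the order is compatible with multiplication, the same then holds for
`u (x^α) = ∏ u (X i) ^ α i` with respect to `x^α`. Writing `f = ∑ c_α x^α`, every monomial
of `u f` is therefore `⪯` the largest monomial `d` of `f`, and at `d` only `u (x^d)`
contributes, with coefficient `c_d`.
-/

open MvPolynomial

namespace MvPolynomial

open Finset Finsupp

variable {σ R : Type*} [CommSemiring R]

variable (R) in
noncomputable abbrev restrictSupportLE (le : (σ →₀ ℕ) → (σ →₀ ℕ) → Prop) (a : σ →₀ ℕ) :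
    Submodule R (MvPolynomial σ R) :=
  restrictSupport R {d | le d a}

variable {le : (σ →₀ ℕ) → (σ →₀ ℕ) → Prop} {p q : MvPolynomial σ R} {a b : σ →₀ ℕ}

theorem restrictSupportLE_mono [IsTrans _ le] (h : le a b) :
    restrictSupportLE R le a ≤ restrictSupportLE R le b :=
  restrictSupport_mono R fun _ hd => trans_of le hd h

theorem monomial_mem_restrictSupportLE (h : le b a) (c : R) :
    monomial b c ∈ restrictSupportLE R le a :=
  (Finset.coe_subset.2 support_monomial_subset).trans (by simpa using h)

theorem mul_mem_restrictSupportLE [IsTrans _ le] (hmul : ∀ a b c, le a b → le (a + c) (b + c))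
    (hp : p ∈ restrictSupportLE R le a) (hq : q ∈ restrictSupportLE R le b) :
    p * q ∈ restrictSupportLE R le (a + b) := by
  classical
  intro d hd
  obtain ⟨x, hx, y, hy, rfl⟩ := Finset.mem_add.1 (support_mul p q hd)
  have hxy : le (x + y) (a + y) := hmul _ _ _ (hp hx)
  have hyb : le (a + y) (a + b) := by
    rw [add_comm a y, add_comm a b]
    exact hmul _ _ _ (hq hy)
  exact trans_of le hxy hyb

theorem coeff_add_mul_of_mem_restrictSupportLE [Std.Antisymm le]
    (hmul : ∀ a b c, le a b → le (a + c) (b + c))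
    (hp : p ∈ restrictSupportLE R le a) (hq : q ∈ restrictSupportLE R le b) :
    (p * q).coeff (a + b) = p.coeff a * q.coeff b := by
  classical
  rw [coeff_mul, Finset.sum_eq_single (a, b)]
  · rintro ⟨x, y⟩ hxy hne
    rw [Finset.HasAntidiagonal.mem_antidiagonal] at hxy
    dsimp only at hxy ⊢
    by_contra hc
    have hx : x ∈ p.support := mem_support_iff.2 (left_ne_zero_of_mul hc)
    have hy : y ∈ q.support := mem_support_iff.2 (right_ne_zero_of_mul hc)
    have hle : le (x + y) (a + y) := hmul _ _ _ (hp hx)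
    have hge : le (a + y) (x + y) := by
      rw [hxy, add_comm a y, add_comm a b]
      exact hmul _ _ _ (hq hy)
    obtain rfl : x = a := add_right_cancel (antisymm_of le hle hge)
    exact hne (by rw [add_left_cancel hxy])
  · simp

variable {ι : Type*} {s : Finset ι} {P : ι → MvPolynomial σ R} {A : ι → σ →₀ ℕ}

theorem prod_mem_restrictSupportLE [IsPreorder _ le]
    (hmul : ∀ a b c, le a b → le (a + c) (b + c))
    (h : ∀ i ∈ s, P i ∈ restrictSupportLE R le (A i)) :
    ∏ i ∈ s, P i ∈ restrictSupportLE R le (∑ i ∈ s, A i) := by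
  classical
  induction s using Finset.induction_on with
  | empty => simpa using monomial_mem_restrictSupportLE (refl_of le 0) (1 : R)
  | insert i s hi ih =>
    rw [prod_insert hi, sum_insert hi]
    exact mul_mem_restrictSupportLE hmul (h i (mem_insert_self i s))
      (ih fun j hj => h j (mem_insert_of_mem hj))

theorem coeff_sum_prod_of_mem_restrictSupportLE [IsPartialOrder _ le]
    (hmul : ∀ a b c, le a b → le (a + c) (b + c))
    (h : ∀ i ∈ s, P i ∈ restrictSupportLE R le (A i)) :
    (∏ i ∈ s, P i).coeff (∑ i ∈ s, A i) = ∏ i ∈ s, (P i).coeff (A i) := by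
  classical
  induction s using Finset.induction_on with
  | empty => simp
  | insert i s hi ih =>
    have hs : ∀ j ∈ s, P j ∈ restrictSupportLE R le (A j) := fun j hj => h j (mem_insert_of_mem hj)
    rw [prod_insert hi, sum_insert hi, prod_insert hi,
      coeff_add_mul_of_mem_restrictSupportLE hmul (h i (mem_insert_self i s))
        (prod_mem_restrictSupportLE hmul hs), ih hs]

theorem pow_mem_restrictSupportLE [IsPreorder _ le]
    (hmul : ∀ a b c, le a b → le (a + c) (b + c)) (hp : p ∈ restrictSupportLE R le a) (n : ℕ) :
    p ^ n ∈ restrictSupportLE R le (n • a) := by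
  simpa using prod_mem_restrictSupportLE hmul (s := range n) (P := fun _ => p) fun _ _ => hp

theorem coeff_nsmul_pow_of_mem_restrictSupportLE [IsPartialOrder _ le]
    (hmul : ∀ a b c, le a b → le (a + c) (b + c)) (hp : p ∈ restrictSupportLE R le a) (n : ℕ) :
    (p ^ n).coeff (n • a) = p.coeff a ^ n := by
  simpa using coeff_sum_prod_of_mem_restrictSupportLE hmul (s := range n) (P := fun _ => p)
    fun _ _ => hp

theorem X_add_sum_mem_restrictSupportLE [Std.Refl le] {j : σ} {t : Finset σ} (c : σ → R)
    (ht : ∀ i ∈ t, le (single i 1) (single j 1)) :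
    X j + ∑ i ∈ t, C (c i) * X i ∈ restrictSupportLE R le (single j 1) :=
  add_mem (monomial_mem_restrictSupportLE (refl_of le _) 1)
    (sum_mem fun i hi => C_mul_X_eq_monomial (R := R) ▸ monomial_mem_restrictSupportLE (ht i hi) _)

theorem coeff_single_X_add_sum {j : σ} {t : Finset σ} (c : σ → R) (hj : j ∉ t) :
    (X j + ∑ i ∈ t, C (c i) * X i).coeff (single j 1) = 1 := by
  classical
  simp [coeff_X, coeff_sum, single_left_inj one_ne_zero, hj]

theorem map_eq_sum_coeff_smul_map_monomial_one {A : Type*} [Semiring A] [Algebra R A]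
    (φ : MvPolynomial σ R →ₐ[R] A) (f : MvPolynomial σ R) :
    φ f = ∑ v ∈ f.support, f.coeff v • φ (monomial v 1) := by
  conv_lhs => rw [f.as_sum, map_sum]
  refine sum_congr rfl fun v _ => ?_
  rw [← map_smul, smul_monomial, smul_eq_mul, mul_one]

theorem map_monomial_one_eq_prod_map_X_pow {A : Type*} [CommSemiring A] [Algebra R A]
    (φ : MvPolynomial σ R →ₐ[R] A) (α : σ →₀ ℕ) :
    φ (monomial α 1) = ∏ i ∈ α.support, φ (X i) ^ α i := by
  rw [← prod_X_pow_eq_monomial, map_prod]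
  simp only [map_pow]

theorem sum_support_smul_single_one (α : σ →₀ ℕ) : ∑ i ∈ α.support, α i • single i 1 = α := by
  simp only [smul_single_one]
  exact sum_single α

variable {φ : MvPolynomial σ R →ₐ[R] MvPolynomial σ R}

theorem map_monomial_one_mem_restrictSupportLE [IsPreorder _ le]
    (hmul : ∀ a b c, le a b → le (a + c) (b + c))
    (hφ : ∀ i, φ (X i) ∈ restrictSupportLE R le (single i 1)) (α : σ →₀ ℕ) :
    φ (monomial α 1) ∈ restrictSupportLE R le α := by
  have := prod_mem_restrictSupportLE hmul fun i (_ : i ∈ α.support) =>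
    pow_mem_restrictSupportLE hmul (hφ i) (α i)
  rwa [sum_support_smul_single_one, ← map_monomial_one_eq_prod_map_X_pow] at this

theorem coeff_map_monomial_one_self [IsPartialOrder _ le]
    (hmul : ∀ a b c, le a b → le (a + c) (b + c))
    (hφ : ∀ i, φ (X i) ∈ restrictSupportLE R le (single i 1))
    (hφ₁ : ∀ i, (φ (X i)).coeff (single i 1) = 1) (α : σ →₀ ℕ) :
    (φ (monomial α 1)).coeff α = 1 := by
  have := coeff_sum_prod_of_mem_restrictSupportLE hmul fun i (_ : i ∈ α.support) =>
    pow_mem_restrictSupportLE hmul (hφ i) (α i)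
  simp only [coeff_nsmul_pow_of_mem_restrictSupportLE hmul (hφ _), hφ₁, one_pow,
    prod_const_one] at this
  rwa [sum_support_smul_single_one, ← map_monomial_one_eq_prod_map_X_pow] at this

theorem map_mem_restrictSupportLE [IsPreorder _ le]
    (hmul : ∀ a b c, le a b → le (a + c) (b + c))
    (hφ : ∀ i, φ (X i) ∈ restrictSupportLE R le (single i 1))
    {f : MvPolynomial σ R} (hf : f ∈ restrictSupportLE R le a) :
    φ f ∈ restrictSupportLE R le a := by
  rw [map_eq_sum_coeff_smul_map_monomial_one]
  exact sum_mem fun v hv => Submodule.smul_mem _ _ <|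
    restrictSupportLE_mono (hf hv) (map_monomial_one_mem_restrictSupportLE hmul hφ v)

theorem coeff_map_of_mem_restrictSupportLE [IsPartialOrder _ le]
    (hmul : ∀ a b c, le a b → le (a + c) (b + c))
    (hφ : ∀ i, φ (X i) ∈ restrictSupportLE R le (single i 1))
    (hφ₁ : ∀ i, (φ (X i)).coeff (single i 1) = 1)
    {f : MvPolynomial σ R} (hf : f ∈ restrictSupportLE R le a) :
    (φ f).coeff a = f.coeff a := by
  rw [map_eq_sum_coeff_smul_map_monomial_one, coeff_sum, Finset.sum_eq_single a]
  · rw [coeff_smul, coeff_map_monomial_one_self hmul hφ hφ₁, smul_eq_mul, mul_one]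
  · intro v hv hva
    have hva' : (φ (monomial v 1)).coeff a = 0 := by
      by_contra ha
      exact hva <| antisymm_of le (hf hv)
        (map_monomial_one_mem_restrictSupportLE hmul hφ v (mem_support_iff.2 ha))
    rw [coeff_smul, hva', smul_zero]
  · intro ha
    rw [MvPolynomial.notMem_support_iff.1 ha, zero_smul, coeff_zero]

end MvPolynomial

theorem initial_term_invariant_under_unipotent_general
    (R : Type*) [CommRing R] (N : ℕ)
    (le : (Fin N →₀ ℕ) → (Fin N →₀ ℕ) → Prop)
    (hlin : IsLinearOrder (Fin N →₀ ℕ) le)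
    (hmul : ∀ a b c, le a b → le (a + c) (b + c))
    (hvar : ∀ i j : Fin N, i < j →
      le (Finsupp.single i 1) (Finsupp.single j 1) ∧
      ¬ le (Finsupp.single j 1) (Finsupp.single i 1))
    (g : Fin N → Fin N → R)
    (u : MvPolynomial (Fin N) R →ₐ[R] MvPolynomial (Fin N) R)
    (hu : ∀ j : Fin N, u (X j) =
      X j + ∑ i ∈ Finset.univ.filter (fun i => i < j), C (g i j) * X i)
    (f : MvPolynomial (Fin N) R) (hf : f ≠ 0) :
    u f ≠ 0 ∧
    ∀ d : Fin N →₀ ℕ, d ∈ f.support → (∀ d' ∈ f.support, le d' d) →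
      d ∈ (u f).support ∧ (∀ d' ∈ (u f).support, le d' d) ∧
      (u f).coeff d = f.coeff d := by
  have := hlin
  have hX (j : Fin N) : u (X j) ∈ restrictSupportLE R le (Finsupp.single j 1) :=
    hu j ▸ X_add_sum_mem_restrictSupportLE _ fun i hi => (hvar i j (Finset.mem_filter.1 hi).2).1
  have hX₁ (j : Fin N) : (u (X j)).coeff (Finsupp.single j 1) = 1 :=
    hu j ▸ coeff_single_X_add_sum _ (by simp)
  have hcoeff {d} (hd : ∀ d' ∈ f.support, le d' d) : (u f).coeff d = f.coeff d :=
    coeff_map_of_mem_restrictSupportLE hmul hX hX₁ hd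
  have : Nonempty f.support := (support_nonempty.2 hf).to_subtype
  obtain ⟨⟨m, hm⟩, hmax⟩ :=
    (Std.Total.directed (r := le) ((↑) : f.support → _)).finset_le Finset.univ
  refine ⟨fun h0 => ?_, fun d hd hdmax =>
    ⟨?_, map_mem_restrictSupportLE hmul hX hdmax, hcoeff hdmax⟩⟩
  · have := hcoeff fun d' hd' => hmax ⟨d', hd'⟩ (Finset.mem_univ _)
    rw [h0, coeff_zero] at this
    exact mem_support_iff.1 hm this.symm
  · rw [mem_support_iff, hcoeff hdmax]
    exact mem_support_iff.1 hd

/-- let `⪯` be a monomial order on `R[x_1, …, x_N]` with `x_i ≺ x_j` for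
`i < j`, and let `u` be the `R`-algebra endomorphism with
`u(x_j) = x_j + Σ_{i<j} g i j • x_i`.  Then `u` preserves initial terms: for nonzero `f`,
`u f` is nonzero, the `⪯`-largest monomial of `u f` is that of `f`, and the leading
coefficients agree. -/
theorem initial_term_invariant_under_unipotent
    (R : Type*) [CommRing R] (N : ℕ) (hN : 1 ≤ N)
    (le : (Fin N →₀ ℕ) → (Fin N →₀ ℕ) → Prop)
    (hlin : IsLinearOrder (Fin N →₀ ℕ) le)
    (hbot : ∀ a, le 0 a)
    (hmul : ∀ a b c, le a b → le (a + c) (b + c))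
    (hvar : ∀ i j : Fin N, i < j →
      le (Finsupp.single i 1) (Finsupp.single j 1) ∧
      ¬ le (Finsupp.single j 1) (Finsupp.single i 1))
    (g : Fin N → Fin N → R)
    (u : MvPolynomial (Fin N) R →ₐ[R] MvPolynomial (Fin N) R)
    (hu : ∀ j : Fin N, u (X j) =
      X j + ∑ i ∈ Finset.univ.filter (fun i => i < j), C (g i j) * X i)
    (f : MvPolynomial (Fin N) R) (hf : f ≠ 0) :
    u f ≠ 0 ∧
    ∀ d : Fin N →₀ ℕ, d ∈ f.support → (∀ d' ∈ f.support, le d' d) →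
      d ∈ (u f).support ∧ (∀ d' ∈ (u f).support, le d' d) ∧
      (u f).coeff d = f.coeff d :=
  initial_term_invariant_under_unipotent_general R N le hlin hmul hvar g u hu f hf
end

section
/- Let R be a commutative ring, N ≥ 1, and let ⪯ be a monomial order on the polynomial ring R[x_1,…,x_N] such that the monomial x_i is strictly smaller than x_j whenever i < j. Let u be the R-algebra endomorphism of R[x_1,…,x_N] determined by u(x_j) = x_j + Σ_{i<j} g_{ij} x_i for some scalars g_{ij} ∈ R. Then u is an R-algebra automorphism, and for every ideal I ⊆ R[x_1,…,x_N] the ideals I and u(I) have the same initial ideal: the set of pairs (⪯-largest monomial, leading coefficient) of nonzero elements of I equals the corresponding set for the image ideal u(I). -/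
open MvPolynomial

/-!
Call `f` monic of degree `a` when `f - x^a` only has monomials strictly below `x^a`. Because the
order is compatible with multiplication, such elements are closed under products, so `u` maps
every monomial `x^a` to `x^a` plus strictly smaller terms, and hence every `f` to `f` plus terms
strictly below its leading monomial. Thus `u` preserves leading monomials and coefficients, which
also gives injectivity; surjectivity follows by induction on `j`, since
`x_j = u(x_j) - Σ_{i<j} g_{ij} x_i`.
-/

theorem Finset.Nonempty.exists_max_of_total {α : Type*} (r : α → α → Prop) [Std.Total r]
    [IsTrans α r] {s : Finset α} (hs : s.Nonempty) : ∃ a ∈ s, ∀ b ∈ s, r b a := by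
  induction hs using Finset.Nonempty.cons_induction with
  | singleton a => exact ⟨a, by simp, by simpa using refl_of r a⟩
  | cons a s _ _ ih =>
    obtain ⟨m, hm, hmax⟩ := ih
    rcases total_of r a m with h | h
    · exact ⟨m, mem_cons_of_mem hm, by simpa [h] using hmax⟩
    · refine ⟨a, mem_cons_self a s, ?_⟩
      simpa [refl_of r a] using fun b hb => trans_of r (hmax b hb) h

theorem not_le_add_of_not_le_of_le {M : Type*} [AddCommMagma M] [IsRightCancelAdd M]
    {le : M → M → Prop} [IsLinearOrder M le] (hmul : ∀ a b c, le a b → le (a + c) (b + c))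
    {a₁ a₂ b₁ b₂ : M} (h₁ : ¬ le a₁ b₁) (h₂ : le b₂ a₂) : ¬ le (a₁ + a₂) (b₁ + b₂) := by
  intro h
  have hb : le (b₁ + b₂) (b₁ + a₂) := by simpa [add_comm] using hmul _ _ b₁ h₂
  have hba : le (b₁ + a₂) (a₁ + a₂) := hmul _ _ _ ((total_of le b₁ a₁).resolve_right h₁)
  have heq : a₁ + a₂ = b₁ + a₂ := antisymm (trans_of le h hb) hba
  exact h₁ (add_right_cancel heq ▸ refl_of le a₁)

namespace MvPolynomial

variable {σ R : Type*} {le : (σ →₀ ℕ) → (σ →₀ ℕ) → Prop}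

section CommSemiring

variable [CommSemiring R]

theorem sum_C_mul_X_mem_adjoin {s : Finset σ} {t : Set σ} (hst : ∀ i ∈ s, i ∈ t) (c : σ → R) :
    ∑ i ∈ s, C (c i) * X i ∈ Algebra.adjoin R (X '' t) :=
  Subalgebra.sum_mem _ fun i hi => Subalgebra.mul_mem _ (Subalgebra.algebraMap_mem _ (c i))
    (Algebra.subset_adjoin ⟨i, hst i hi, rfl⟩)

def IsLeadingTerm (le : (σ →₀ ℕ) → (σ →₀ ℕ) → Prop) (f : MvPolynomial σ R) (a : σ →₀ ℕ) (c : R) :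
    Prop :=
  a ∈ f.support ∧ (∀ b ∈ f.support, le b a) ∧ f.coeff a = c

theorem IsLeadingTerm.ne_zero {f : MvPolynomial σ R} {a : σ →₀ ℕ} {c : R}
    (h : IsLeadingTerm le f a c) : f ≠ 0 := by
  rintro rfl
  simpa using h.1

theorem restrictSupport_not_le_le_restrictSupport_le [Std.Total le] (a : σ →₀ ℕ) :
    restrictSupport R {b | ¬ le a b} ≤ restrictSupport R {b | le b a} :=
  restrictSupport_mono R fun _ hb => (total_of le _ a).resolve_right hb

theorem restrictSupport_not_le_mono [IsTrans _ le] {a a' : σ →₀ ℕ} (h : le a a') :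
    restrictSupport R {b | ¬ le a b} ≤ restrictSupport R {b | ¬ le a' b} :=
  restrictSupport_mono R fun _ hb h' => hb (trans_of le h h')

theorem mul_mem_restrictSupport_not_le [IsLinearOrder _ le]
    (hmul : ∀ a b c, le a b → le (a + c) (b + c)) {p f : MvPolynomial σ R} {a b : σ →₀ ℕ}
    (hp : p ∈ restrictSupport R {c | ¬ le a c}) (hf : f ∈ restrictSupport R {c | le c b}) :
    p * f ∈ restrictSupport R {c | ¬ le (a + b) c} := by
  classical
  intro γ hγ
  obtain ⟨β, hβ, β', hβ', rfl⟩ := Finset.mem_add.1 (support_mul p f hγ)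
  exact not_le_add_of_not_le_of_le hmul (hp hβ) (hf hβ')

end CommSemiring

variable [CommRing R]

theorem surjective_of_map_X_sub_X_mem_adjoin [LinearOrder σ] [WellFoundedLT σ]
    {u : MvPolynomial σ R →ₐ[R] MvPolynomial σ R}
    (hu : ∀ j, u (X j) - X j ∈ Algebra.adjoin R (X '' Set.Iio j)) : Function.Surjective u := by
  have hX : ∀ j, X j ∈ u.range := by
    intro j
    induction j using WellFoundedLT.induction with
    | _ j ih =>
      have hle : Algebra.adjoin R (X '' Set.Iio j) ≤ u.range :=
        Algebra.adjoin_le (by rintro _ ⟨i, hi, rfl⟩; exact ih i hi)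
      simpa using sub_mem (u.mem_range_self (X j)) (hle (hu j))
  rw [← AlgHom.range_eq_top, eq_top_iff, ← adjoin_range_X, Algebra.adjoin_le_iff]
  rintro _ ⟨j, rfl⟩
  exact hX j

def IsMonicOfDegree (le : (σ →₀ ℕ) → (σ →₀ ℕ) → Prop) (f : MvPolynomial σ R) (a : σ →₀ ℕ) :
    Prop :=
  f - monomial a 1 ∈ restrictSupport R {b | ¬ le a b}

theorem isMonicOfDegree_X_add_sum_C_mul_X {j : σ} {s : Finset σ}
    (hs : ∀ i ∈ s, ¬ le (Finsupp.single j 1) (Finsupp.single i 1)) (c : σ → R) :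
    IsMonicOfDegree le (X j + ∑ i ∈ s, C (c i) * X i) (Finsupp.single j 1) := by
  rw [IsMonicOfDegree, ← X, add_sub_cancel_left]
  exact Submodule.sum_mem _ fun i hi => by simp [C_mul_X_eq_monomial, hs i hi]

section AddCompatible

variable [IsLinearOrder _ le] (hmul : ∀ a b c, le a b → le (a + c) (b + c))
include hmul

theorem IsMonicOfDegree.mul {f g : MvPolynomial σ R} {a b : σ →₀ ℕ}
    (hf : IsMonicOfDegree le f a) (hg : IsMonicOfDegree le g b) :
    IsMonicOfDegree le (f * g) (a + b) := by
  have hsplit : f * g - monomial (a + b) 1 =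
      (f - monomial a 1) * g + (g - monomial b 1) * monomial a 1 := by
    have hm : monomial a (1 : R) * monomial b 1 = monomial (a + b) 1 := by simp [monomial_mul]
    rw [← hm]
    ring
  have hgb : g ∈ restrictSupport R {c | le c b} := by
    simpa using add_mem (restrictSupport_not_le_le_restrictSupport_le b hg)
      ((monomial_mem_restrictSupport R).2 (.inl (refl_of le b)) :
        monomial b (1 : R) ∈ restrictSupport R {c | le c b})
  rw [IsMonicOfDegree, hsplit]
  refine add_mem (mul_mem_restrictSupport_not_le hmul hf hgb) ?_
  simpa [add_comm] using mul_mem_restrictSupport_not_le hmul hg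
    ((monomial_mem_restrictSupport R).2 (.inl (refl_of le a)) :
      monomial a (1 : R) ∈ restrictSupport R {c | le c a})

theorem IsMonicOfDegree.pow {f : MvPolynomial σ R} {a : σ →₀ ℕ} (hf : IsMonicOfDegree le f a)
    (n : ℕ) : IsMonicOfDegree le (f ^ n) (n • a) := by
  induction n with
  | zero => simp [IsMonicOfDegree]
  | succ n ih => simpa [pow_succ, succ_nsmul] using ih.mul hmul hf

variable {u : MvPolynomial σ R →ₐ[R] MvPolynomial σ R}
  (hX : ∀ j, IsMonicOfDegree le (u (X j)) (Finsupp.single j 1))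
include hX

theorem isMonicOfDegree_map_monomial (a : σ →₀ ℕ) :
    IsMonicOfDegree le (u (monomial a 1)) a := by
  induction a using Finsupp.induction with
  | zero => simp [IsMonicOfDegree]
  | single_add j n a _ _ ih =>
    have hj := (hX j).pow hmul n
    rw [Finsupp.smul_single_one] at hj
    rw [← one_mul (1 : R), ← monomial_mul, map_mul, ← X_pow_eq_monomial, map_pow]
    exact hj.mul hmul ih

theorem map_sub_self_mem_restrictSupport_not_le {f : MvPolynomial σ R} {a : σ →₀ ℕ}
    (hf : f ∈ restrictSupport R {b | le b a}) :
    u f - f ∈ restrictSupport R {b | ¬ le a b} := by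
  have hspan : restrictSupport R {b | le b a} ≤
      (restrictSupport R {b | ¬ le a b}).comap (u.toLinearMap - LinearMap.id) := by
    rw [restrictSupport_eq_span, Submodule.span_le]
    rintro _ ⟨b, hb, rfl⟩
    exact restrictSupport_not_le_mono hb (isMonicOfDegree_map_monomial hmul hX b)
  simpa using hspan hf

theorem IsLeadingTerm.map {f : MvPolynomial σ R} {a : σ →₀ ℕ} {c : R}
    (h : IsLeadingTerm le f a c) : IsLeadingTerm le (u f) a c := by
  obtain ⟨ha, hmax, hc⟩ := h
  have hfa : f ∈ restrictSupport R {b | le b a} :=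
    (mem_restrictSupport_iff R).2 fun b hb => hmax b hb
  have hr := map_sub_self_mem_restrictSupport_not_le hmul hX hfa
  have hcoeff : (u f).coeff a = f.coeff a := by
    have : (u f - f).coeff a = 0 := notMem_support_iff.1 fun h => hr h (refl_of le a)
    rwa [coeff_sub, sub_eq_zero] at this
  refine ⟨mem_support_iff.2 (hcoeff ▸ mem_support_iff.1 ha), fun b hb => ?_, hcoeff.trans hc⟩
  have hle : u f ∈ restrictSupport R {b | le b a} := by
    simpa using add_mem hfa (restrictSupport_not_le_le_restrictSupport_le a hr)
  exact hle hb

theorem isLeadingTerm_map_iff {f : MvPolynomial σ R} {a : σ →₀ ℕ} {c : R} :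
    IsLeadingTerm le (u f) a c ↔ IsLeadingTerm le f a c := by
  refine ⟨fun h => ?_, IsLeadingTerm.map hmul hX⟩
  have hf : f ≠ 0 := by rintro rfl; exact h.ne_zero (map_zero u)
  obtain ⟨a', ha', hmax⟩ := (support_nonempty.2 hf).exists_max_of_total le
  have h' := IsLeadingTerm.map hmul hX ⟨ha', hmax, rfl⟩
  obtain rfl : a = a' := antisymm (h'.2.1 a h.1) (h.2.1 a' h'.1)
  exact ⟨ha', hmax, h'.2.2.symm.trans h.2.2⟩

theorem injective_of_isMonicOfDegree_map_X : Function.Injective u := by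
  refine (injective_iff_map_eq_zero u).2 fun f hf => ?_
  by_contra h0
  obtain ⟨a, ha, hmax⟩ := (support_nonempty.2 h0).exists_max_of_total le
  exact (IsLeadingTerm.map hmul hX ⟨ha, hmax, rfl⟩).ne_zero hf

end AddCompatible

end MvPolynomial

theorem initial_ideal_invariant_under_unipotent_general
    (R : Type*) [CommRing R] (N : ℕ)
    (le : (Fin N →₀ ℕ) → (Fin N →₀ ℕ) → Prop)
    (hlin : IsLinearOrder (Fin N →₀ ℕ) le)
    (hmul : ∀ a b c, le a b → le (a + c) (b + c))
    (hvar : ∀ i j : Fin N, i < j →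
      le (Finsupp.single i 1) (Finsupp.single j 1) ∧
      ¬ le (Finsupp.single j 1) (Finsupp.single i 1))
    (g : Fin N → Fin N → R)
    (u : MvPolynomial (Fin N) R →ₐ[R] MvPolynomial (Fin N) R)
    (hu : ∀ j : Fin N, u (X j) =
      X j + ∑ i ∈ Finset.univ.filter (fun i => i < j), C (g i j) * X i) :
    Function.Bijective u ∧
    ∀ I : Ideal (MvPolynomial (Fin N) R),
      {dc : (Fin N →₀ ℕ) × R | ∃ f ∈ I, f ≠ 0 ∧ dc.1 ∈ f.support ∧
        (∀ d' ∈ f.support, le d' dc.1) ∧ f.coeff dc.1 = dc.2} =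
      {dc : (Fin N →₀ ℕ) × R | ∃ f ∈ Ideal.map u.toRingHom I, f ≠ 0 ∧ dc.1 ∈ f.support ∧
        (∀ d' ∈ f.support, le d' dc.1) ∧ f.coeff dc.1 = dc.2} := by
  have hX : ∀ j, IsMonicOfDegree le (u (X j)) (Finsupp.single j 1) := fun j =>
    hu j ▸ isMonicOfDegree_X_add_sum_C_mul_X (fun i hi => (hvar i j (Finset.mem_filter.1 hi).2).2) _
  have hsurj : Function.Surjective u := surjective_of_map_X_sub_X_mem_adjoin fun j => by
    rw [hu j, add_sub_cancel_left]
    exact sum_C_mul_X_mem_adjoin (fun i hi => (Finset.mem_filter.1 hi).2) _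
  refine ⟨⟨injective_of_isMonicOfDegree_map_X hmul hX, hsurj⟩,
    fun I => Set.ext fun ⟨a, c⟩ => ⟨?_, ?_⟩⟩
  · rintro ⟨f, hfI, -, hf⟩
    have hf' : IsLeadingTerm le (u f) a c := (isLeadingTerm_map_iff hmul hX).2 hf
    exact ⟨u f, Ideal.mem_map_of_mem _ hfI, hf'.ne_zero, hf'⟩
  · rintro ⟨_, hI, -, hf⟩
    obtain ⟨f, hfI, rfl⟩ := (Ideal.mem_map_iff_of_surjective _ hsurj).1 hI
    have hf' : IsLeadingTerm le f a c := (isLeadingTerm_map_iff hmul hX).1 hf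
    exact ⟨f, hfI, hf'.ne_zero, hf'⟩

/-- let `⪯` be a monomial order on `R[x_1, …, x_N]` with `x_i ≺ x_j` for
`i < j`, and let `u` be the `R`-algebra endomorphism with
`u(x_j) = x_j + Σ_{i<j} g i j • x_i`.  Then `u` is an algebra automorphism, and for every
ideal `I` the ideals `I` and `u(I)` have the same initial ideal, in the sense that the
set of pairs (largest monomial, leading coefficient) of nonzero elements of `I` equals
the corresponding set for `u(I)`. -/
theorem initial_ideal_invariant_under_unipotent
    (R : Type*) [CommRing R] (N : ℕ) (hN : 1 ≤ N)
    (le : (Fin N →₀ ℕ) → (Fin N →₀ ℕ) → Prop)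
    (hlin : IsLinearOrder (Fin N →₀ ℕ) le)
    (hbot : ∀ a, le 0 a)
    (hmul : ∀ a b c, le a b → le (a + c) (b + c))
    (hvar : ∀ i j : Fin N, i < j →
      le (Finsupp.single i 1) (Finsupp.single j 1) ∧
      ¬ le (Finsupp.single j 1) (Finsupp.single i 1))
    (g : Fin N → Fin N → R)
    (u : MvPolynomial (Fin N) R →ₐ[R] MvPolynomial (Fin N) R)
    (hu : ∀ j : Fin N, u (X j) =
      X j + ∑ i ∈ Finset.univ.filter (fun i => i < j), C (g i j) * X i) :
    Function.Bijective u ∧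
    ∀ I : Ideal (MvPolynomial (Fin N) R),
      {dc : (Fin N →₀ ℕ) × R | ∃ f ∈ I, f ≠ 0 ∧ dc.1 ∈ f.support ∧
        (∀ d' ∈ f.support, le d' dc.1) ∧ f.coeff dc.1 = dc.2} =
      {dc : (Fin N →₀ ℕ) × R | ∃ f ∈ Ideal.map u.toRingHom I, f ≠ 0 ∧ dc.1 ∈ f.support ∧
        (∀ d' ∈ f.support, le d' dc.1) ∧ f.coeff dc.1 = dc.2} :=
  initial_ideal_invariant_under_unipotent_general R N le hlin hmul hvar g u hu
end

section
/- For every n ≥ 3, the ℚ-algebra endomorphism u of the exterior algebra Λ_n determined by u(e_{{i,j}}) = e_{{i,j}} + e_{{i−1,j+1}} − e_{{i−1,j}} − e_{{i,j+1}} (terms whose index pair does not lie in C_n being omitted) is bijective, i.e. an algebra automorphism of Λ_n. -/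
/-!
On generators, `u` is the functorial extension to `Λ_n` of the linear endomorphism `1 + ρ`
of `ℚ^{C_n}`, where `ρ = lengthRaise n` sends `e_{i,j}` to
`e_{i-1,j+1} - e_{i-1,j} - e_{i,j+1}`. Each of these chords is strictly longer than `{i,j}`,
and chord lengths are bounded by `n`, so `ρ` is nilpotent.
Hence `1 + ρ` is invertible, and so is its extension `u`.
-/

open scoped BigOperators

/-- `eIf p` is the generator `e_p` if the pair `p` lies in `C_n`, and `0` otherwise. -/
noncomputable def eIf (n : ℕ) (p : ℕ × ℕ) : GravAlg n :=
  if h : ChordP n p then e ⟨p, h⟩ else 0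

/-- The defining property of the change-of-basis endomorphism `u` of `Λ_n`:
`u(e_{i,j}) = e_{i,j} + e_{i-1,j+1} - e_{i-1,j} - e_{i,j+1}`, where terms whose index
pair does not lie in `C_n` are omitted. -/
def IsChangeOfBasis {n : ℕ} (u : GravAlg n →ₐ[ℚ] GravAlg n) : Prop :=
  ∀ c : GChord n, u (e c) =
    eIf n (c.val.1, c.val.2) + eIf n (c.val.1 - 1, c.val.2 + 1)
      - eIf n (c.val.1 - 1, c.val.2) - eIf n (c.val.1, c.val.2 + 1)

open Finsupp

theorem ExteriorAlgebra.map_bijective {R M N : Type*} [CommRing R] [AddCommGroup M]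
    [Module R M] [AddCommGroup N] [Module R N] {f : M →ₗ[R] N} (hf : Function.Bijective f) :
    Function.Bijective (map f) :=
  let e := LinearEquiv.ofBijective f hf
  ⟨map_injective ⟨e.symm.toLinearMap, LinearMap.ext e.symm_apply_apply⟩,
    map_surjective_iff.mpr hf.2⟩

namespace Finsupp

variable {α R : Type*} [Semiring R] (deg : α → ℕ) {φ : (α →₀ R) →ₗ[R] (α →₀ R)}

theorem supported_le_comap_of_single_mem
    (hφ : ∀ a, φ (single a 1) ∈ supported R R {b | deg a < deg b}) (m : ℕ) :
    supported R R {a | m ≤ deg a} ≤ (supported R R {a | m + 1 ≤ deg a}).comap φ := by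
  rw [supported_eq_span_single, Submodule.span_le]
  rintro _ ⟨a, ha, rfl⟩
  exact supported_mono (fun b (hb : deg a < deg b) => (show m ≤ deg a from ha).trans_lt hb) (hφ a)

theorem pow_apply_mem_supported
    (hφ : ∀ a, φ (single a 1) ∈ supported R R {b | deg a < deg b}) (k : ℕ) (x : α →₀ R) :
    (φ ^ k) x ∈ supported R R {a | k ≤ deg a} := by
  induction k with
  | zero => exact fun a _ => Nat.zero_le (deg a)
  | succ k ih =>
    rw [pow_succ', Module.End.mul_apply]
    exact supported_le_comap_of_single_mem deg hφ k ih

theorem isNilpotent_of_single_mem_supported {N : ℕ} (hdeg : ∀ a, deg a < N)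
    (hφ : ∀ a, φ (single a 1) ∈ supported R R {b | deg a < deg b}) : IsNilpotent φ := by
  refine ⟨N, LinearMap.ext fun x => ?_⟩
  have hempty : {a | N ≤ deg a} = ∅ := Set.eq_empty_of_forall_notMem fun a => (hdeg a).not_ge
  simpa [hempty] using pow_apply_mem_supported deg hφ N x

end Finsupp

section Chords

variable {n : ℕ}

noncomputable def singleIf (n : ℕ) (p : ℕ × ℕ) : GChord n →₀ ℚ :=
  if h : ChordP n p then single ⟨p, h⟩ 1 else 0

theorem eIf_val (c : GChord n) : eIf n (c.val.1, c.val.2) = e c :=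
  dif_pos c.property

theorem ι_singleIf (p : ℕ × ℕ) : ExteriorAlgebra.ι ℚ (singleIf n p) = eIf n p := by
  unfold singleIf eIf
  split <;> simp [e]

theorem singleIf_mem_supported {s : Set (GChord n)} {p : ℕ × ℕ}
    (h : ∀ hp : ChordP n p, ⟨p, hp⟩ ∈ s) : singleIf n p ∈ supported ℚ ℚ s := by
  unfold singleIf
  split
  · exact single_mem_supported ℚ 1 (h _)
  · exact Submodule.zero_mem _

def chordLength (c : GChord n) : ℕ := c.val.2 - c.val.1

theorem chordLength_lt (c : GChord n) : chordLength c < n := by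
  have := c.property
  unfold ChordP at this
  unfold chordLength
  omega

noncomputable def lengthRaise (n : ℕ) : (GChord n →₀ ℚ) →ₗ[ℚ] (GChord n →₀ ℚ) :=
  linearCombination ℚ fun c =>
    singleIf n (c.val.1 - 1, c.val.2 + 1) - singleIf n (c.val.1 - 1, c.val.2)
      - singleIf n (c.val.1, c.val.2 + 1)

theorem lengthRaise_single_mem_supported (c : GChord n) :
    lengthRaise n (single c 1) ∈ supported ℚ ℚ {d | chordLength c < chordLength d} := by
  have hc := c.property
  unfold ChordP at hc
  simp only [lengthRaise, linearCombination_single, one_smul]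
  refine Submodule.sub_mem _ (Submodule.sub_mem _ ?_ ?_) ?_ <;>
    exact singleIf_mem_supported fun _ => show chordLength c < chordLength ⟨_, _⟩ by
      unfold chordLength; dsimp only; omega

theorem isNilpotent_lengthRaise : IsNilpotent (lengthRaise n) :=
  isNilpotent_of_single_mem_supported chordLength chordLength_lt
    lengthRaise_single_mem_supported

theorem IsChangeOfBasis.eq_map {u : GravAlg n →ₐ[ℚ] GravAlg n} (hu : IsChangeOfBasis u) :
    u = ExteriorAlgebra.map (1 + lengthRaise n) := by
  refine ExteriorAlgebra.hom_ext (lhom_ext' fun c => LinearMap.ext_ring ?_)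
  simp only [LinearMap.comp_apply, lsingle_apply, AlgHom.toLinearMap_apply,
    ExteriorAlgebra.map_apply_ι, LinearMap.add_apply, Module.End.one_apply, lengthRaise,
    linearCombination_single, one_smul, map_add, map_sub, ι_singleIf]
  rw [show ExteriorAlgebra.ι ℚ (single c 1) = e c from rfl, hu c, eIf_val]
  abel

end Chords

theorem changeOfBasis_bijective_general (n : ℕ)
    (u : GravAlg n →ₐ[ℚ] GravAlg n) (hu : IsChangeOfBasis u) :
    Function.Bijective u := by
  have hunit : IsUnit (1 + lengthRaise n) := isNilpotent_lengthRaise.isUnit_one_add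
  rw [hu.eq_map]
  exact ExteriorAlgebra.map_bijective ((Module.End.isUnit_iff _).mp hunit)

/-- for every `n ≥ 3`, the algebra endomorphism `u` of `Λ_n` determined by
`u(e_{i,j}) = e_{i,j} + e_{i-1,j+1} - e_{i-1,j} - e_{i,j+1}` (terms not in `C_n` omitted)
is bijective, i.e. an algebra automorphism of `Λ_n`. -/
theorem changeOfBasis_bijective (n : ℕ) (hn : 3 ≤ n)
    (u : GravAlg n →ₐ[ℚ] GravAlg n) (hu : IsChangeOfBasis u) :
    Function.Bijective u :=
  changeOfBasis_bijective_general n u hu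
end

section
/- Let r ≥ 2 and let v_0, v_1, …, v_r be pairwise distinct integers such that: (i) for every t with 0 < t < r, either v_t > max(v_{t−1}, v_{t+1}) or v_t < min(v_{t−1}, v_{t+1}); and (ii) writing ℓ_t = |v_t − v_{t−1}| for 1 ≤ t ≤ r, there is no t with 1 < t < r such that ℓ_t < ℓ_{t−1} and ℓ_t < ℓ_{t+1}. Then: (a) the sequence ℓ_1, …, ℓ_r is strictly unimodal, i.e. there exists p with ℓ_1 < ℓ_2 < ⋯ < ℓ_p and ℓ_p > ℓ_{p+1} > ⋯ > ℓ_r; (b) the endpoints v_{p−1}, v_p of the longest edge are the minimum and the maximum of the values v_0, …, v_r; and (c) |v_0 − v_r| < ℓ_p. -/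
/-- let `v 0, …, v r` (`r ≥ 2`) be pairwise distinct integers such that
(i) the sequence changes direction at every interior index, and (ii) writing
`ℓ t = |v t - v (t-1)|`, no interior edge is strictly shorter than both of its
neighbours.  Then (a) the sequence `ℓ 1, …, ℓ r` is strictly unimodal with peak at some
`p`, (b) the endpoints `v (p-1), v p` of the longest edge are the minimum and maximum of
all the values `v 0, …, v r`, and (c) `|v 0 - v r| < ℓ p`. -/
theorem unimodal_path_lemma (r : ℕ) (hr : 2 ≤ r) (v : ℕ → ℤ)
    (hinj : ∀ s t : ℕ, s ≤ r → t ≤ r → v s = v t → s = t)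
    (hdir : ∀ t : ℕ, 0 < t → t < r →
      (max (v (t - 1)) (v (t + 1)) < v t ∨ v t < min (v (t - 1)) (v (t + 1))))
    (hnovalley : ¬ ∃ t : ℕ, 1 < t ∧ t < r ∧
      |v t - v (t - 1)| < |v (t - 1) - v (t - 2)| ∧
      |v t - v (t - 1)| < |v (t + 1) - v t|) :
    ∃ p : ℕ, 1 ≤ p ∧ p ≤ r ∧
      (∀ t : ℕ, 1 ≤ t → t < p → |v t - v (t - 1)| < |v (t + 1) - v t|) ∧
      (∀ t : ℕ, p ≤ t → t < r → |v (t + 1) - v t| < |v t - v (t - 1)|) ∧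
      (∀ t : ℕ, t ≤ r → min (v (p - 1)) (v p) ≤ v t ∧ v t ≤ max (v (p - 1)) (v p)) ∧
      |v 0 - v r| < |v p - v (p - 1)| := by
  -- reformulate the direction-change condition with clean indices
  have hdir' : ∀ s : ℕ, s + 1 < r →
      (v s < v (s + 1) ∧ v (s + 2) < v (s + 1)) ∨
      (v (s + 1) < v s ∧ v (s + 1) < v (s + 2)) := by
    intro s hs
    have h := hdir (s + 1) (by omega) hs
    simp only [Nat.add_sub_cancel] at h
    rcases h with h | h
    · exact Or.inl ⟨lt_of_le_of_lt (le_max_left _ _) h,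
        lt_of_le_of_lt (le_max_right _ _) h⟩
    · exact Or.inr ⟨lt_of_lt_of_le h (min_le_left _ _),
        lt_of_lt_of_le h (min_le_right _ _)⟩
  -- consecutive edge lengths are never equal
  have hne : ∀ s : ℕ, s + 1 < r → |v (s + 1) - v s| ≠ |v (s + 2) - v (s + 1)| := by
    intro s hs heq
    have h2 : v s = v (s + 2) := by
      rcases hdir' s hs with ⟨h1, h2⟩ | ⟨h1, h2⟩
      · rw [abs_of_nonneg (by linarith), abs_of_nonpos (by linarith)] at heq; linarith
      · rw [abs_of_nonpos (by linarith), abs_of_nonneg (by linarith)] at heq; linarith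
    have := hinj s (s + 2) (by omega) (by omega) h2
    omega
  -- no valley, with clean indices
  have hnov : ∀ s : ℕ, s + 2 < r →
      ¬ (|v (s + 2) - v (s + 1)| < |v (s + 1) - v s| ∧
         |v (s + 2) - v (s + 1)| < |v (s + 3) - v (s + 2)|) := by
    intro s hs hcon
    exact hnovalley ⟨s + 2, by omega, hs, hcon.1, hcon.2⟩
  -- once decreasing, always decreasing
  have hdec1 : ∀ s : ℕ, s + 2 < r → |v (s + 2) - v (s + 1)| < |v (s + 1) - v s| →
      |v (s + 3) - v (s + 2)| < |v (s + 2) - v (s + 1)| := by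
    intro s hs h
    have h3 : ¬ |v (s + 2) - v (s + 1)| < |v (s + 3) - v (s + 2)| :=
      fun hc => hnov s hs ⟨h, hc⟩
    exact lt_of_le_of_ne (not_lt.mp h3) (Ne.symm (hne (s + 1) (by omega)))
  -- find the peak index q (edge q+1 is the longest)
  obtain ⟨q, hqr, hinc, hdecr⟩ : ∃ q : ℕ, q + 1 ≤ r ∧
      (∀ s, s < q → |v (s + 1) - v s| < |v (s + 2) - v (s + 1)|) ∧
      (∀ t, q ≤ t → t + 1 < r → |v (t + 2) - v (t + 1)| < |v (t + 1) - v t|) := by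
    by_cases hex : ∃ s : ℕ, s + 1 < r ∧ |v (s + 2) - v (s + 1)| < |v (s + 1) - v s|
    · refine ⟨Nat.find hex, le_of_lt (Nat.find_spec hex).1, ?_, ?_⟩
      · intro s hs
        have hsr : s + 1 < r := by have := (Nat.find_spec hex).1; omega
        have hmin := Nat.find_min hex hs
        have hnl : ¬ |v (s + 2) - v (s + 1)| < |v (s + 1) - v s| :=
          fun hc => hmin ⟨hsr, hc⟩
        exact lt_of_le_of_ne (not_lt.mp hnl) (hne s hsr)
      · intro t ht
        induction t, ht using Nat.le_induction with
        | base => intro _; exact (Nat.find_spec hex).2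
        | succ t ht ih => intro h1; exact hdec1 t (by omega) (ih (by omega))
    · push_neg at hex
      refine ⟨r - 1, by omega, ?_, ?_⟩
      · intro s hs
        have hsr : s + 1 < r := by omega
        exact lt_of_le_of_ne (hex s hsr) (hne s hsr)
      · intro t ht ht1
        exact absurd ht1 (by omega)
  -- all vertices lie between the endpoints of the longest edge
  have hbnd : ∀ t, t ≤ r →
      min (v q) (v (q + 1)) ≤ v t ∧ v t ≤ max (v q) (v (q + 1)) := by
    have fwd : ∀ k, q + k + 1 ≤ r →
        (min (v q) (v (q + 1)) ≤ v (q + k) ∧ v (q + k) ≤ max (v q) (v (q + 1))) ∧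
        (min (v q) (v (q + 1)) ≤ v (q + k + 1) ∧
          v (q + k + 1) ≤ max (v q) (v (q + 1))) := by
      intro k
      induction k with
      | zero =>
        intro _
        exact ⟨⟨min_le_left _ _, le_max_left _ _⟩, ⟨min_le_right _ _, le_max_right _ _⟩⟩
      | succ k ih =>
        intro hk
        have h1 := ih (by omega)
        show (min (v q) (v (q + 1)) ≤ v (q + k + 1) ∧
            v (q + k + 1) ≤ max (v q) (v (q + 1))) ∧
          (min (v q) (v (q + 1)) ≤ v (q + k + 2) ∧
            v (q + k + 2) ≤ max (v q) (v (q + 1)))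
        refine ⟨h1.2, ?_⟩
        have hdch := hdir' (q + k) (by omega)
        have hd := hdecr (q + k) (by omega) (by omega)
        rcases hdch with ⟨ha, hb⟩ | ⟨ha, hb⟩
        · rw [abs_of_nonpos (by linarith), abs_of_nonneg (by linarith)] at hd
          exact ⟨by linarith [h1.1.1], by linarith [h1.2.2]⟩
        · rw [abs_of_nonneg (by linarith), abs_of_nonpos (by linarith)] at hd
          exact ⟨by linarith [h1.2.1], by linarith [h1.1.2]⟩
    have bwd : ∀ k j, j + k = q →
        (min (v q) (v (q + 1)) ≤ v j ∧ v j ≤ max (v q) (v (q + 1))) ∧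
        (min (v q) (v (q + 1)) ≤ v (j + 1) ∧ v (j + 1) ≤ max (v q) (v (q + 1))) := by
      intro k
      induction k with
      | zero =>
        intro j hj
        have : j = q := by omega
        subst this
        exact ⟨⟨min_le_left _ _, le_max_left _ _⟩, ⟨min_le_right _ _, le_max_right _ _⟩⟩
      | succ k ih =>
        intro j hj
        have h1 := ih (j + 1) (by omega)
        refine ⟨?_, h1.1⟩
        have hdch := hdir' j (by omega)
        have hi := hinc j (by omega)
        rcases hdch with ⟨ha, hb⟩ | ⟨ha, hb⟩
        · rw [abs_of_nonneg (by linarith), abs_of_nonpos (by linarith)] at hi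
          exact ⟨by linarith [h1.2.1], by linarith [h1.1.2]⟩
        · rw [abs_of_nonpos (by linarith), abs_of_nonneg (by linarith)] at hi
          exact ⟨by linarith [h1.1.1], by linarith [h1.2.2]⟩
    intro t ht
    rcases le_or_gt t q with h | h
    · exact (bwd (q - t) t (by omega)).1
    · have h2 := (fwd (t - q - 1) (by omega)).2
      have he : q + (t - q - 1) + 1 = t := by omega
      rwa [he] at h2
  -- assemble the answer with p = q + 1
  refine ⟨q + 1, by omega, by omega, ?_, ?_, ?_, ?_⟩
  · intro t ht htp
    obtain ⟨s, rfl⟩ : ∃ s, t = s + 1 := ⟨t - 1, by omega⟩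
    simpa using hinc s (by omega)
  · intro t ht htr
    obtain ⟨s, rfl⟩ : ∃ s, t = s + 1 := ⟨t - 1, by omega⟩
    simpa using hdecr s (by omega) (by omega)
  · intro t ht
    simpa using hbnd t ht
  · have h0 := hbnd 0 (by omega)
    have hr2 := hbnd r (by omega)
    have key : max (v q) (v (q + 1)) - min (v q) (v (q + 1)) = |v (q + 1) - v q| := by
      rcases le_total (v q) (v (q + 1)) with h | h
      · rw [max_eq_right h, min_eq_left h, abs_of_nonneg (by linarith)]
      · rw [max_eq_left h, min_eq_right h, abs_of_nonpos (by linarith)]; ring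
    simp only [Nat.add_sub_cancel]
    by_contra hcon
    push_neg at hcon
    rw [← key] at hcon
    have hle : |v 0 - v r| ≤ max (v q) (v (q + 1)) - min (v q) (v (q + 1)) := by
      rw [abs_le]
      constructor <;> linarith [h0.1, h0.2, hr2.1, hr2.2]
    have heq : |v 0 - v r| = max (v q) (v (q + 1)) - min (v q) (v (q + 1)) :=
      le_antisymm hle hcon
    rcases abs_cases (v 0 - v r) with ⟨he, _⟩ | ⟨he, _⟩
    · have h0M : v 0 = max (v q) (v (q + 1)) := by
        have := h0.2; have := hr2.1; linarith [heq, he]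
      have hrm : v r = min (v q) (v (q + 1)) := by
        have := h0.2; have := hr2.1; linarith [heq, he]
      rcases max_cases (v q) (v (q + 1)) with ⟨hx, _⟩ | ⟨hx, _⟩
      · have := hinj 0 q (by omega) (by omega) (by rw [h0M, hx])
        rcases min_cases (v q) (v (q + 1)) with ⟨hy, _⟩ | ⟨hy, _⟩
        · have := hinj r q (by omega) (by omega) (by rw [hrm, hy]); omega
        · have := hinj r (q + 1) (by omega) (by omega) (by rw [hrm, hy]); omega
      · have := hinj 0 (q + 1) (by omega) (by omega) (by rw [h0M, hx]); omega
    · have h0m : v 0 = min (v q) (v (q + 1)) := by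
        have := h0.1; have := hr2.2; linarith [heq, he]
      have hrM : v r = max (v q) (v (q + 1)) := by
        have := h0.1; have := hr2.2; linarith [heq, he]
      rcases min_cases (v q) (v (q + 1)) with ⟨hy, _⟩ | ⟨hy, _⟩
      · have := hinj 0 q (by omega) (by omega) (by rw [h0m, hy])
        rcases max_cases (v q) (v (q + 1)) with ⟨hx, _⟩ | ⟨hx, _⟩
        · have := hinj r q (by omega) (by omega) (by rw [hrM, hx]); omega
        · have := hinj r (q + 1) (by omega) (by omega) (by rw [hrM, hx]); omega
      · have := hinj 0 (q + 1) (by omega) (by omega) (by rw [h0m, hy]); omega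
end

section
/- Let n ≥ 3 and c ∈ C_n. Let ι_c be the unique odd derivation of Λ_n with ι_c(e_c) = 1 and ι_c(e_{c′}) = 0 for all c′ ≠ c, and let π_c : Λ_n → Λ_n be the ℚ-algebra homomorphism with π_c(e_{c′}) = 0 if c′ crosses c and π_c(e_{c′}) = e_{c′} otherwise. Then for every completely crossing pair (A, B) in C_n, π_c(ι_c((Σ_{a∈A} e_a)·(Σ_{b∈B} e_b))) = 0. -/
open scoped BigOperators

instance : ∀ c d : ℕ × ℕ, Decidable (ChordCross c d) := fun c d => by
  unfold ChordCross; infer_instance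

/-- `A, B ⊆ C_n` form a completely crossing pair: `B` is exactly the set of chords
crossing every chord of `A`, and vice versa. -/
def CompletelyCrossing {n : ℕ} (A B : Finset (GChord n)) : Prop :=
  (∀ c : GChord n, c ∈ B ↔ ∀ a ∈ A, ChordCross a.val c.val) ∧
  (∀ c : GChord n, c ∈ A ↔ ∀ b ∈ B, ChordCross c.val b.val)

/-- let `ι_c` be the unique odd derivation of `Λ_n` with `ι_c(e_c) = 1`
and `ι_c(e_{c'}) = 0` for `c' ≠ c`, and let `π_c` be the algebra endomorphism of `Λ_n`
with `π_c(e_{c'}) = 0` if `c'` crosses `c` and `π_c(e_{c'}) = e_{c'}` otherwise.  Then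
for every completely crossing pair `(A, B)`,
`π_c(ι_c((Σ_{a∈A} e_a)·(Σ_{b∈B} e_b))) = 0`. -/
theorem residue_welldefined_on_relations (n : ℕ) (hn : 3 ≤ n) (c : GChord n)
    (iota : GravAlg n →ₗ[ℚ] GravAlg n)
    (hiota_one : iota 1 = 0)
    (hiota_gen : ∀ c' : GChord n, iota (e c') = if c' = c then 1 else 0)
    (hiota_der : ∀ (m : GChord n →₀ ℚ) (x : GravAlg n),
      iota (ExteriorAlgebra.ι ℚ m * x) = (m c) • x - ExteriorAlgebra.ι ℚ m * iota x)
    (pi : GravAlg n →ₐ[ℚ] GravAlg n)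
    (hpi : ∀ c' : GChord n,
      pi (e c') = if ChordCross c'.val c.val then 0 else e c')
    (A B : Finset (GChord n)) (hAB : CompletelyCrossing A B) :
    pi (iota ((∑ a ∈ A, e a) * (∑ b ∈ B, e b))) = 0 := by
  obtain ⟨hB, hA⟩ := hAB
  have hx : (∑ a ∈ A, e a) =
      ExteriorAlgebra.ι ℚ (∑ a ∈ A, Finsupp.single a (1 : ℚ)) := by
    simp [e, map_sum]
  have hmc : (∑ a ∈ A, Finsupp.single a (1 : ℚ)) c
      = if c ∈ A then (1 : ℚ) else 0 := by
    rw [Finset.sum_apply']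
    simp [Finsupp.single_apply, Finset.sum_ite_eq']
  have hiy : iota (∑ b ∈ B, e b) = if c ∈ B then 1 else 0 := by
    rw [map_sum]
    simp only [hiota_gen]
    simp [Finset.sum_ite_eq']
  have key : iota ((∑ a ∈ A, e a) * (∑ b ∈ B, e b)) =
      (if c ∈ A then (1 : ℚ) else 0) • (∑ b ∈ B, e b) -
        (∑ a ∈ A, e a) * (if c ∈ B then 1 else 0) := by
    rw [hx, hiota_der, hmc, hiy, ← hx]
  rw [key]
  by_cases hcA : c ∈ A
  · have hcB : c ∉ B := by
      intro hcB
      have : ChordCross c.val c.val := (hB c).1 hcB c hcA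
      simp [ChordCross] at this
    have hpiy : pi (∑ b ∈ B, e b) = 0 := by
      rw [map_sum]
      refine Finset.sum_eq_zero fun b hb => ?_
      have hcr : ChordCross c.val b.val := (hB b).1 hb c hcA
      have : ChordCross b.val c.val := Or.symm hcr
      rw [hpi, if_pos this]
    simp [hcA, hcB, hpiy]
  · by_cases hcB : c ∈ B
    · have hpix : pi (∑ a ∈ A, e a) = 0 := by
        rw [map_sum]
        refine Finset.sum_eq_zero fun a ha => ?_
        have : ChordCross a.val c.val := (hB c).1 hcB a ha
        rw [hpi, if_pos this]
      simp [hcA, hcB, hpix]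
    · simp [hcA, hcB]
end
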